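/- arXiv:cs/0701007 — 10 statements merged into one kernel-verified Lean document; each statement's English description precedes it below -/
import Mathlib

section
/- Let K⁻ be the graph obtained from K₄ on vertices v₁, v₂, v₃, v₄ by deleting the edge v₁v₂. In every (4,1)-coloring c of K⁻, if c(v₁) = c(v₂) then the associated digraph D_c(K⁻) is acyclic and contains no directed path between v₁ and v₂ (in either direction). -/
/-- A `(p,q)`-circular coloring of `G`: colors in `{0,…,p-1}` with
`q ≤ |c x - c y| ≤ p - q` on every edge. -/
def IsCircColoring {V : Type*} (G : SimpleGraph V) (p q : ℕ) (c : V → ℕ) : Prop :=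
  (∀ v, c v < p) ∧ ∀ ⦃x y⦄, G.Adj x y →
    (q : ℤ) ≤ |(c x : ℤ) - (c y : ℤ)| ∧ |(c x : ℤ) - (c y : ℤ)| ≤ (p : ℤ) - (q : ℤ)

/-- The circular chromatic number: `inf { p/q : G has a (p,q)-coloring }`. -/
noncomputable def circChrom {V : Type*} (G : SimpleGraph V) : ℝ :=
  sInf {r : ℝ | ∃ p q : ℕ, 0 < p ∧ 0 < q ∧ r = (p : ℝ) / (q : ℝ) ∧
    ∃ c : V → ℕ, IsCircColoring G p q c}

/-- The arc relation of the digraph `D_c(G)` associated to a `(p,q)`-coloring `c`: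
an arc `x → y` for every edge `xy` with `c y - c x ≡ q (mod p)`. -/
def DArc {V : Type*} (G : SimpleGraph V) (p q : ℕ) (c : V → ℕ) (x y : V) : Prop :=
  G.Adj x y ∧ ((c y : ℤ) - (c x : ℤ)) % (p : ℤ) = (q : ℤ) % (p : ℤ)

/-- A relation (digraph) is acyclic: no directed cycle, i.e. no vertex reaches
itself by a nontrivial directed path. -/
def Acyclic {V : Type*} (R : V → V → Prop) : Prop :=
  ∀ v, ¬ Relation.TransGen R v v

/-- A `(p,1)`-coloring viewed as a proper coloring with colors in `ZMod p`. -/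
def IsProperZ {V : Type*} (p : ℕ) (G : SimpleGraph V) (c : V → ZMod p) : Prop :=
  ∀ ⦃x y⦄, G.Adj x y → c x ≠ c y

/-- Arc relation of `D_c(G)` for a `(p,1)`-coloring with colors in `ZMod p`:
an arc `x → y` for every edge `xy` with `c y - c x = 1`. -/
def ZArc {V : Type*} {p : ℕ} (G : SimpleGraph V) (c : V → ZMod p) (x y : V) : Prop :=
  G.Adj x y ∧ c y - c x = 1

/-- `K⁻`: the complete graph on `{0,1,2,3}` (with `v₁ = 0`, `v₂ = 1`, `v₃ = 2`,
`v₄ = 3`) minus the edge `{0,1}`. -/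
def Kminus : SimpleGraph (Fin 4) :=
  SimpleGraph.fromRel (fun x y => ¬((x = 0 ∧ y = 1) ∨ (x = 1 ∧ y = 0)))

/-- Edge list of the gadget `H`: vertices `a = 0`, `b = 1`, `c = 2`, `d = 3`,
and four copies of `K⁻` with terminal pairs `(a,d), (d,b), (b,c), (c,a)` whose
internal vertex pairs are `(4,5), (6,7), (8,9), (10,11)`, together with the
edges `ad, db, bc, ca`. -/
def HEdges : List (Fin 12 × Fin 12) :=
  [(0,4),(0,5),(3,4),(3,5),(4,5),
   (3,6),(3,7),(1,6),(1,7),(6,7),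
   (1,8),(1,9),(2,8),(2,9),(8,9),
   (2,10),(2,11),(0,10),(0,11),(10,11),
   (0,3),(3,1),(1,2),(2,0)]

/-- The gadget graph `H`. -/
def HGraph : SimpleGraph (Fin 12) :=
  SimpleGraph.fromRel (fun x y => (x, y) ∈ HEdges)

/-- The gadget graph `K` for parameters `k, n`: vertices `a = 0`, `b = 1`, and
`vᵢ = i + 1` for `1 ≤ i ≤ n - 1`; the `vᵢ` form a clique, `a` is adjacent to
`v₁, …, v_{n-2}` and `b` is adjacent to `v_{n-1}`. -/
def Kgadget (n : ℕ) : SimpleGraph (Fin (n + 1)) :=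
  SimpleGraph.fromRel (fun x y =>
    (2 ≤ x.val ∧ 2 ≤ y.val) ∨ (x.val = 0 ∧ 2 ≤ y.val ∧ y.val ≤ n - 1) ∨
      (x.val = 1 ∧ y.val = n))

/-- `o` orients every edge of `G'` (chooses exactly one direction for each edge). -/
def Orients {V : Type*} (G' : SimpleGraph V) (o : V → V → Prop) : Prop :=
  ∀ ⦃u v⦄, G'.Adj u v → (o u v ↔ ¬ o v u)

/-- The graph obtained from `G'` by replacing every edge `uv` (oriented by `o`)
by a copy of the gadget `(Hg; ta, tb)`: `u` is identified with `ta`, `v` with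
`tb`, and the internal vertices of the copy for the edge `uv` are the vertices
`(u, v, i)`. -/
def replaceEdges {V W : Type*} (G' : SimpleGraph V) (o : V → V → Prop)
    (Hg : SimpleGraph W) (ta tb : W) :
    SimpleGraph (V ⊕ (V × V × {w : W // w ≠ ta ∧ w ≠ tb})) :=
  SimpleGraph.fromRel (fun z w =>
    match z, w with
    | Sum.inl u, Sum.inl v => G'.Adj u v ∧ Hg.Adj ta tb
    | Sum.inl u, Sum.inr (x, y, i) =>
        G'.Adj x y ∧ o x y ∧ ((u = x ∧ Hg.Adj ta i.1) ∨ (u = y ∧ Hg.Adj tb i.1))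
    | Sum.inr (x, y, i), Sum.inr (x', y', j) =>
        x = x' ∧ y = y' ∧ G'.Adj x y ∧ o x y ∧ Hg.Adj i.1 j.1
    | _, _ => False)

/-- Disjoint union of two simple graphs. -/
def disjUnion {V W : Type*} (G : SimpleGraph V) (H : SimpleGraph W) :
    SimpleGraph (V ⊕ W) :=
  SimpleGraph.fromRel (fun z w =>
    match z, w with
    | Sum.inl a, Sum.inl b => G.Adj a b
    | Sum.inr a, Sum.inr b => H.Adj a b
    | _, _ => False)

private lemma zmod4_val_succ (z : ZMod 4) (h0 : z ≠ 0) (h3 : z ≠ 3) :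
    (z + 1).val = z.val + 1 := by revert z; decide

/-- in every `(4,1)`-coloring `c` of `K⁻`, if `c v₁ = c v₂` then
`D_c(K⁻)` is acyclic and has no directed path between `v₁` and `v₂`. -/
theorem stmt_5 (c : Fin 4 → ZMod 4) (hc : IsProperZ 4 Kminus c)
    (h : c 0 = c 1) :
    Acyclic (ZArc Kminus c) ∧ ¬ Relation.TransGen (ZArc Kminus c) 0 1 ∧
      ¬ Relation.TransGen (ZArc Kminus c) 1 0 := by
  -- find a missing color m
  obtain ⟨m, hm⟩ : ∃ m : ZMod 4, ∀ v, c v ≠ m := by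
    by_contra hcon
    push_neg at hcon
    have hsurj : Function.Surjective c := fun m => hcon m
    have hbij : Function.Bijective c :=
      (Fintype.bijective_iff_surjective_and_card c).2 ⟨hsurj, by decide⟩
    have := hbij.injective h
    exact absurd this (by decide)
  -- potential function
  set g : Fin 4 → ℕ := fun v => (c v - m).val with hg
  have key : ∀ x y, ZArc Kminus c x y → g y = g x + 1 := by
    intro x y ⟨_, harc⟩
    have hx0 : c x - m ≠ 0 := fun hh => hm x (by
      have := sub_eq_zero.mp hh; exact this)
    have hx3 : c x - m ≠ 3 := by
      intro hh
      apply hm y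
      have hy : c y = c x + 1 := by linear_combination harc
      have hcx : c x = m + 3 := by linear_combination hh
      have h4 : (4 : ZMod 4) = 0 := by decide
      rw [hy, hcx]; linear_combination h4
    have hstep : c y - m = (c x - m) + 1 := by linear_combination harc
    simp only [hg, hstep, zmod4_val_succ _ hx0 hx3]
  have mono : ∀ x y, Relation.TransGen (ZArc Kminus c) x y → g x < g y := by
    intro x y hxy
    induction hxy with
    | single hr => have := key _ _ hr; omega
    | tail _ hr ih => have := key _ _ hr; omega
  refine ⟨fun v hv => absurd (mono v v hv) (lt_irrefl _), ?_, ?_⟩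
  · intro hp
    have := mono _ _ hp
    simp only [hg, h] at this
    omega
  · intro hp
    have := mono _ _ hp
    simp only [hg, h] at this
    omega
end

section
/- Let K⁻ be K₄ on vertices v₁, v₂, v₃, v₄ with the edge v₁v₂ deleted. In every (4,1)-coloring c of K⁻, if c(v₁) - c(v₂) ≡ 1 (mod 4) then the digraph D_c(K⁻) is acyclic and contains a directed path from v₁ to v₂. -/

lemma acyclic_of_measure {V : Type*} {R : V → V → Prop} (f : V → ℕ)
    (hf : ∀ x y, R x y → f x < f y) : Acyclic R := by
  intro v hv
  have key : ∀ a b, Relation.TransGen R a b → f a < f b := by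
    intro a b hab
    induction hab with
    | single h => exact hf _ _ h
    | tail _ h ih => exact ih.trans (hf _ _ h)
  exact lt_irrefl _ (key v v hv)

lemma build_aux (c : Fin 4 → ZMod 4) (a0 a1 a2 a3 : ZMod 4) (f : Fin 4 → ℕ) (u w : Fin 4)
    (h0 : c 0 = a0) (h1 : c 1 = a1) (h2 : c 2 = a2) (h3 : c 3 = a3)
    (hall : (∀ x y, ZArc Kminus ![a0,a1,a2,a3] x y → f x < f y) ∧
      ZArc Kminus ![a0,a1,a2,a3] 0 u ∧ ZArc Kminus ![a0,a1,a2,a3] u w ∧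
      ZArc Kminus ![a0,a1,a2,a3] w 1) :
    Acyclic (ZArc Kminus c) ∧ Relation.TransGen (ZArc Kminus c) 0 1 := by
  have hceq : c = ![a0,a1,a2,a3] := by
    funext v; fin_cases v; exacts [h0, h1, h2, h3]
  subst hceq
  obtain ⟨mono, p1, p2, p3⟩ := hall
  exact ⟨acyclic_of_measure f mono,
    Relation.TransGen.head p1 (Relation.TransGen.head p2 (Relation.TransGen.single p3))⟩

/-- in every `(4,1)`-coloring `c` of `K⁻`, if `c v₁ - c v₂ = 1`
then `D_c(K⁻)` is acyclic and has a directed path from `v₁` to `v₂`. -/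
theorem stmt_6 (c : Fin 4 → ZMod 4) (hc : IsProperZ 4 Kminus c)
    (h : c 0 - c 1 = 1) :
    Acyclic (ZArc Kminus c) ∧ Relation.TransGen (ZArc Kminus c) 0 1 := by
  have a02 : Kminus.Adj 0 2 := by unfold Kminus; simp only [SimpleGraph.fromRel_adj]; decide
  have a03 : Kminus.Adj 0 3 := by unfold Kminus; simp only [SimpleGraph.fromRel_adj]; decide
  have a12 : Kminus.Adj 1 2 := by unfold Kminus; simp only [SimpleGraph.fromRel_adj]; decide
  have a13 : Kminus.Adj 1 3 := by unfold Kminus; simp only [SimpleGraph.fromRel_adj]; decide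
  have a23 : Kminus.Adj 2 3 := by unfold Kminus; simp only [SimpleGraph.fromRel_adj]; decide
  have n02 := hc a02
  have n03 := hc a03
  have n12 := hc a12
  have n13 := hc a13
  have n23 := hc a23
  have h4 : (4 : ZMod 4) = 0 := by decide
  have h1' : c 1 = c 0 + 3 := by linear_combination -h - h4
  have key : ∀ z : ZMod 4, z ≠ 0 → z ≠ 3 → z = 1 ∨ z = 2 := by decide
  have hd2 : c 2 - c 0 = 1 ∨ c 2 - c 0 = 2 :=
    key _ (fun e => n02 (by linear_combination -e)) (fun e => n12 (by linear_combination h1' - e))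
  have hd3 : c 3 - c 0 = 1 ∨ c 3 - c 0 = 2 :=
    key _ (fun e => n03 (by linear_combination -e)) (fun e => n13 (by linear_combination h1' - e))
  have ha : c 0 = 0 ∨ c 0 = 1 ∨ c 0 = 2 ∨ c 0 = 3 := by
    have : ∀ z : ZMod 4, z = 0 ∨ z = 1 ∨ z = 2 ∨ z = 3 := by decide
    exact this (c 0)
  rcases hd2 with e2 | e2 <;> rcases hd3 with e3 | e3
  · exact absurd (by linear_combination e2 - e3 : c 2 = c 3) n23
  · -- case A: c 2 = c 0 + 1, c 3 = c 0 + 2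
    have hc2 : c 2 = c 0 + 1 := by linear_combination e2
    have hc3 : c 3 = c 0 + 2 := by linear_combination e3
    rcases ha with ha | ha | ha | ha
    · exact build_aux c 0 3 1 2 ![0,3,1,2] 2 3 ha (by rw [h1', ha]; decide)
        (by rw [hc2, ha]; decide) (by rw [hc3, ha]; decide)
        (by unfold ZArc Kminus; simp only [SimpleGraph.fromRel_adj]; decide)
    · exact build_aux c 1 0 2 3 ![0,3,1,2] 2 3 ha (by rw [h1', ha]; decide)
        (by rw [hc2, ha]; decide) (by rw [hc3, ha]; decide)
        (by unfold ZArc Kminus; simp only [SimpleGraph.fromRel_adj]; decide)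
    · exact build_aux c 2 1 3 0 ![0,3,1,2] 2 3 ha (by rw [h1', ha]; decide)
        (by rw [hc2, ha]; decide) (by rw [hc3, ha]; decide)
        (by unfold ZArc Kminus; simp only [SimpleGraph.fromRel_adj]; decide)
    · exact build_aux c 3 2 0 1 ![0,3,1,2] 2 3 ha (by rw [h1', ha]; decide)
        (by rw [hc2, ha]; decide) (by rw [hc3, ha]; decide)
        (by unfold ZArc Kminus; simp only [SimpleGraph.fromRel_adj]; decide)
  · -- case B: c 2 = c 0 + 2, c 3 = c 0 + 1
    have hc2 : c 2 = c 0 + 2 := by linear_combination e2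
    have hc3 : c 3 = c 0 + 1 := by linear_combination e3
    rcases ha with ha | ha | ha | ha
    · exact build_aux c 0 3 2 1 ![0,3,2,1] 3 2 ha (by rw [h1', ha]; decide)
        (by rw [hc2, ha]; decide) (by rw [hc3, ha]; decide)
        (by unfold ZArc Kminus; simp only [SimpleGraph.fromRel_adj]; decide)
    · exact build_aux c 1 0 3 2 ![0,3,2,1] 3 2 ha (by rw [h1', ha]; decide)
        (by rw [hc2, ha]; decide) (by rw [hc3, ha]; decide)
        (by unfold ZArc Kminus; simp only [SimpleGraph.fromRel_adj]; decide)
    · exact build_aux c 2 1 0 3 ![0,3,2,1] 3 2 ha (by rw [h1', ha]; decide)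
        (by rw [hc2, ha]; decide) (by rw [hc3, ha]; decide)
        (by unfold ZArc Kminus; simp only [SimpleGraph.fromRel_adj]; decide)
    · exact build_aux c 3 2 1 0 ![0,3,2,1] 3 2 ha (by rw [h1', ha]; decide)
        (by rw [hc2, ha]; decide) (by rw [hc3, ha]; decide)
        (by unfold ZArc Kminus; simp only [SimpleGraph.fromRel_adj]; decide)
  · exact absurd (by linear_combination e2 - e3 : c 2 = c 3) n23
end

section
/- Let K⁻ be K₄ on vertices v₁, v₂, v₃, v₄ with the edge v₁v₂ deleted. In every (4,1)-coloring c of K⁻, if c(v₁) - c(v₂) ≡ 2 (mod 4) then the digraph D_c(K⁻) contains a directed cycle. -/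
/-- in every `(4,1)`-coloring `c` of `K⁻`, if `c v₁ - c v₂ = 2`
then `D_c(K⁻)` contains a directed cycle. -/
theorem stmt_7 (c : Fin 4 → ZMod 4) (hc : IsProperZ 4 Kminus c)
    (h : c 0 - c 1 = 2) :
    ∃ v, Relation.TransGen (ZArc Kminus c) v v := by
  -- adjacency facts in Kminus
  have a02 : Kminus.Adj 0 2 := by rw [Kminus, SimpleGraph.fromRel_adj]; decide
  have a03 : Kminus.Adj 0 3 := by rw [Kminus, SimpleGraph.fromRel_adj]; decide
  have a12 : Kminus.Adj 1 2 := by rw [Kminus, SimpleGraph.fromRel_adj]; decide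
  have a13 : Kminus.Adj 1 3 := by rw [Kminus, SimpleGraph.fromRel_adj]; decide
  have a23 : Kminus.Adj 2 3 := by rw [Kminus, SimpleGraph.fromRel_adj]; decide
  -- distinctness of colors
  have n02 := hc a02
  have n03 := hc a03
  have n12 := hc a12
  have n13 := hc a13
  have n23 := hc a23
  -- c 1 = c 0 + 2
  have hc1 : c 1 = c 0 + 2 := by
    have : ∀ a b : ZMod 4, a - b = 2 → b = a + 2 := by decide
    exact this _ _ h
  have key : (c 2 = c 0 + 1 ∧ c 3 = c 0 + 3) ∨ (c 2 = c 0 + 3 ∧ c 3 = c 0 + 1) := by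
    have : ∀ a b d : ZMod 4, b ≠ a → b ≠ a + 2 → d ≠ a → d ≠ a + 2 → d ≠ b →
        (b = a + 1 ∧ d = a + 3) ∨ (b = a + 3 ∧ d = a + 1) := by decide
    refine this (c 0) (c 2) (c 3) (Ne.symm n02) ?_ (Ne.symm n03) ?_ (Ne.symm n23)
    · rw [← hc1]; exact Ne.symm n12
    · rw [← hc1]; exact Ne.symm n13
  rcases key with ⟨h2, h3⟩ | ⟨h2, h3⟩
  · -- cycle 0 → 2 → 1 → 3 → 0
    refine ⟨0, Relation.TransGen.head ⟨a02, ?_⟩ (Relation.TransGen.head ⟨a12.symm, ?_⟩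
      (Relation.TransGen.head ⟨a13, ?_⟩ (Relation.TransGen.single ⟨a03.symm, ?_⟩)))⟩
    · rw [h2]; ring
    · rw [h2, hc1]; ring_nf
    · rw [h3, hc1]; ring_nf
    · rw [h3]; ring_nf; decide
  · -- cycle 0 → 3 → 1 → 2 → 0
    refine ⟨0, Relation.TransGen.head ⟨a03, ?_⟩ (Relation.TransGen.head ⟨a13.symm, ?_⟩
      (Relation.TransGen.head ⟨a12, ?_⟩ (Relation.TransGen.single ⟨a02.symm, ?_⟩)))⟩
    · rw [h3]; ring
    · rw [h3, hc1]; ring_nf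
    · rw [h2, hc1]; ring_nf
    · rw [h2]; ring_nf; decide
end

section
/- A finite graph G satisfies χ_c(G) < p/q if and only if there exists a (p,q)-coloring c of G such that the digraph D_c(G) is acyclic. -/
/-!
If `p'/q' < p/q` and `c'` is a `(p',q')`-coloring, rounding `c' · p / p'` down gives a
`(p,q)`-coloring `c`. The arcs of `D_c(G)` are the edges on which `c` is tight, and on them the
rounding error `c' · p mod p'` strictly increases, so `D_c(G)` is acyclic. Conversely, if `D_c(G)`
is acyclic, the number `h v` of vertices from which `v` is reachable increases along arcs, and
`N · c + h` with `N = |V| + 1` is an `(N p, N q + 1)`-coloring, and `N p / (N q + 1) < p / q`.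
-/

open Relation

lemma abs_sub_mem_Icc_iff {α : Type*} [AddCommGroup α] [LinearOrder α] [IsOrderedAddMonoid α]
    {a b q r : α} (hq : 0 ≤ q) :
    |a - b| ∈ Set.Icc q r ↔ a - b ∈ Set.Icc q r ∨ b - a ∈ Set.Icc q r := by
  constructor
  · intro h
    rcases le_total b a with hba | hab
    · rw [abs_of_nonneg (sub_nonneg.2 hba)] at h
      exact Or.inl h
    · rw [abs_sub_comm, abs_of_nonneg (sub_nonneg.2 hab)] at h
      exact Or.inr h
  · rintro (h | h)
    · rwa [abs_of_nonneg (hq.trans h.1)]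
    · rwa [abs_sub_comm, abs_of_nonneg (hq.trans h.1)]

lemma Int.eq_or_eq_sub_of_emod_eq {a q p : ℤ} (hpa : -p < a) (hap : a < p) (hq : 0 ≤ q)
    (hqp : q < p) (h : a % p = q % p) : a = q ∨ a = q - p := by
  rw [Int.emod_eq_of_lt hq hqp] at h
  rcases le_or_gt 0 a with ha | ha
  · exact Or.inl (by rwa [Int.emod_eq_of_lt ha hap] at h)
  · rw [← Int.add_emod_right, Int.emod_eq_of_lt (by omega) (by omega)] at h
    exact Or.inr (by omega)

lemma mul_ediv_sub_mul_ediv_mem_Icc {p q p' q' a b : ℤ} (hp : 0 ≤ p) (hp' : 0 < p')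
    (hlt : q * p' < q' * p) (hab : a - b ∈ Set.Icc q' (p' - q')) :
    a * p / p' - b * p / p' ∈ Set.Icc q (p - q) ∧
      (a * p / p' - b * p / p' = q → b * p % p' < a * p % p') ∧
      (a * p / p' - b * p / p' = p - q → a * p % p' < b * p % p') := by
  have ha := Int.mul_ediv_add_emod (a * p) p'
  have hb := Int.mul_ediv_add_emod (b * p) p'
  have ha0 := Int.emod_nonneg (a * p) hp'.ne'
  have hb0 := Int.emod_nonneg (b * p) hp'.ne'
  have hap := Int.emod_lt_of_pos (a * p) hp'
  have hbp := Int.emod_lt_of_pos (b * p) hp'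
  generalize a * p / p' = u, b * p / p' = w, a * p % p' = s, b * p % p' = t at *
  have key : (u - w) * p' = (a - b) * p - s + t := by linear_combination ha - hb
  have hlo : q' * p ≤ (a - b) * p := mul_le_mul_of_nonneg_right hab.1 hp
  have hhi : (a - b) * p ≤ (p' - q') * p := mul_le_mul_of_nonneg_right hab.2 hp
  refine ⟨⟨?_, ?_⟩, fun hD => ?_, fun hD => ?_⟩
  · nlinarith
  · nlinarith
  · rw [hD] at key
    linarith
  · rw [hD] at key
    linarith

lemma mul_add_sub_mul_add_mem_Icc {N p q a b h₁ h₂ : ℤ} (h₁0 : 0 ≤ h₁) (h₁N : h₁ < N)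
    (h₂0 : 0 ≤ h₂) (h₂N : h₂ < N) (hab : a - b ∈ Set.Icc q (p - q))
    (hlo : a - b = q → h₂ < h₁) (hhi : a - b = p - q → h₁ < h₂) :
    N * a + h₁ - (N * b + h₂) ∈ Set.Icc (N * q + 1) (N * p - (N * q + 1)) := by
  have key : N * a + h₁ - (N * b + h₂) = N * (a - b) + h₁ - h₂ := by ring
  rw [key]
  constructor
  · rcases hab.1.eq_or_lt with hq | hq
    · rw [← hq]
      linarith [hlo hq.symm]
    · nlinarith
  · rcases hab.2.eq_or_lt with hq | hq
    · rw [hq]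
      linarith [hhi hq]
    · nlinarith

section Acyclic

variable {V : Type*} {R : V → V → Prop}

lemma acyclic_of_lt {α : Type*} [Preorder α] (f : V → α) (hf : ∀ ⦃x y⦄, R x y → f x < f y) :
    Acyclic R :=
  fun v hv => lt_irrefl (f v) (by simpa only [transGen_eq_self] using hv.lift f fun _ _ h => hf h)

noncomputable def predCount (R : V → V → Prop) (v : V) : ℕ :=
  {u | TransGen R u v}.ncard

lemma predCount_le_card [Finite V] (R : V → V → Prop) (v : V) : predCount R v ≤ Nat.card V :=
  Set.ncard_le_card _

lemma predCount_lt_predCount [Finite V] (hR : Acyclic R) {x y : V} (h : R x y) :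
    predCount R x < predCount R y :=
  Set.ncard_lt_ncard ⟨fun _ hu => hu.tail h, fun hsub => hR x (hsub (TransGen.single h))⟩
    (Set.toFinite _)

end Acyclic

section CircColoring

variable {V : Type*} {G : SimpleGraph V} {p q : ℕ} {c : V → ℕ}

lemma isCircColoring_iff : IsCircColoring G p q c ↔ (∀ v, c v < p) ∧ ∀ ⦃x y⦄, G.Adj x y →
    (c x : ℤ) - c y ∈ Set.Icc (q : ℤ) (p - q) ∨ (c y : ℤ) - c x ∈ Set.Icc (q : ℤ) (p - q) :=
  and_congr_right fun _ => forall₂_congr fun _ _ =>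
    imp_congr_right fun _ => abs_sub_mem_Icc_iff (Int.natCast_nonneg q)

lemma IsCircColoring.sub_mem_Icc_or (hc : IsCircColoring G p q c) {x y : V} (hxy : G.Adj x y) :
    (c x : ℤ) - c y ∈ Set.Icc (q : ℤ) (p - q) ∨ (c y : ℤ) - c x ∈ Set.Icc (q : ℤ) (p - q) :=
  (isCircColoring_iff.1 hc).2 hxy

lemma IsCircColoring.dArc_iff (hc : IsCircColoring G p q c) {x y : V} (hxy : G.Adj x y) :
    DArc G p q c x y ↔ (c y : ℤ) - c x = q ∨ (c x : ℤ) - c y = p - q := by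
  have hx := hc.1 x
  have hy := hc.1 y
  have hqp : (q : ℤ) ≤ p - q := (hc.2 hxy).1.trans (hc.2 hxy).2
  constructor
  · rintro ⟨-, h⟩
    rcases Int.eq_or_eq_sub_of_emod_eq (by omega) (by omega) (by omega) (by omega) h with h | h
    · exact Or.inl h
    · exact Or.inr (by omega)
  · rintro (h | h)
    · exact ⟨hxy, by rw [h]⟩
    · refine ⟨hxy, ?_⟩
      rw [show (c y : ℤ) - c x = q + p * (-1) by omega, Int.add_mul_emod_self_left]

lemma exists_isCircColoring [Finite V] (G : SimpleGraph V) :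
    ∃ c : V → ℕ, IsCircColoring G (Nat.card V + 1) 1 c := by
  refine ⟨fun v => Finite.equivFin V v, isCircColoring_iff.2 ⟨fun v => ?_, fun x y hxy => ?_⟩⟩
  · exact Nat.lt_succ_of_lt (Finite.equivFin V v).is_lt
  · have hne : (Finite.equivFin V x : ℕ) ≠ Finite.equivFin V y :=
      fun h => hxy.ne ((Finite.equivFin V).injective (Fin.ext h))
    have hx := (Finite.equivFin V x).is_lt
    have hy := (Finite.equivFin V y).is_lt
    simp only [Set.mem_Icc]
    push_cast
    omega

/-- Each color class is split into `N` consecutive colors ordered by the potential `h`. -/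
theorem IsCircColoring.refine (hc : IsCircColoring G p q c) {N : ℕ} {h : V → ℕ}
    (hN : ∀ v, h v < N) (hh : ∀ ⦃x y⦄, DArc G p q c x y → h x < h y) :
    IsCircColoring G (N * p) (N * q + 1) (fun v => N * c v + h v) := by
  have oriented : ∀ x y, G.Adj x y → (c x : ℤ) - c y ∈ Set.Icc (q : ℤ) (p - q) →
      ((N * c x + h x : ℕ) : ℤ) - (N * c y + h y : ℕ) ∈
        Set.Icc ((N * q + 1 : ℕ) : ℤ) ((N * p : ℕ) - (N * q + 1 : ℕ)) := by
    intro x y hxy hD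
    push_cast
    exact mul_add_sub_mul_add_mem_Icc (by positivity) (by exact_mod_cast hN x) (by positivity)
      (by exact_mod_cast hN y) hD
      (fun h' => by exact_mod_cast hh ((hc.dArc_iff hxy.symm).2 (Or.inl h')))
      (fun h' => by exact_mod_cast hh ((hc.dArc_iff hxy).2 (Or.inr h')))
  refine isCircColoring_iff.2 ⟨fun v => ?_, fun x y hxy =>
    (hc.sub_mem_Icc_or hxy).imp (oriented x y hxy) (oriented y x hxy.symm)⟩
  have := hc.1 v
  have := hN v
  nlinarith

theorem IsCircColoring.rescale {p' q' : ℕ} {c' : V → ℕ} (hc' : IsCircColoring G p' q' c')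
    (hp' : 0 < p') (hq : 0 < q) (hlt : q * p' < q' * p) :
    IsCircColoring G p q (fun v => c' v * p / p') ∧
      Acyclic (DArc G p q (fun v => c' v * p / p')) := by
  have hp : 0 < p := Nat.pos_of_ne_zero (by rintro rfl; simp at hlt)
  have cast : ∀ v, ((c' v * p / p' : ℕ) : ℤ) = (c' v : ℤ) * p / p' := fun v => by push_cast; rfl
  have bounds := fun a b => mul_ediv_sub_mul_ediv_mem_Icc (a := a) (b := b)
    (Int.natCast_nonneg p) (Int.natCast_pos.2 hp') (by exact_mod_cast hlt : (q : ℤ) * p' < q' * p)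
  have hc : IsCircColoring G p q (fun v => c' v * p / p') := by
    refine isCircColoring_iff.2 ⟨fun v => Nat.div_lt_of_lt_mul ?_, fun x y hxy => ?_⟩
    · exact Nat.mul_lt_mul_of_pos_right (hc'.1 v) hp
    · simp only [cast]
      exact (hc'.sub_mem_Icc_or hxy).imp (fun h => (bounds _ _ h).1) (fun h => (bounds _ _ h).1)
  refine ⟨hc, acyclic_of_lt (fun v => (c' v : ℤ) * p % p') fun x y hxy => ?_⟩
  have hadj := hxy.1
  rw [hc.dArc_iff hadj] at hxy
  simp only [cast] at hxy
  rcases hc'.sub_mem_Icc_or hadj with h | h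
  · obtain ⟨hD, -, hhi⟩ := bounds _ _ h
    rcases hxy with h' | h'
    · linarith [hD.1]
    · exact hhi h'
  · obtain ⟨hD, hlo, -⟩ := bounds _ _ h
    rcases hxy with h' | h'
    · exact hlo h'
    · linarith [hD.1, hD.2]

end CircColoring

lemma circChrom_lt_iff {V : Type*} [Finite V] (G : SimpleGraph V) {r : ℝ} :
    circChrom G < r ↔
      ∃ p q : ℕ, ∃ c : V → ℕ, 0 < p ∧ 0 < q ∧ (p : ℝ) / q < r ∧ IsCircColoring G p q c := by
  constructor
  · intro h
    obtain ⟨c₀, hc₀⟩ := exists_isCircColoring G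
    obtain ⟨_, ⟨p, q, hp, hq, rfl, c, hc⟩, hlt⟩ :=
      exists_lt_of_csInf_lt (by exact ⟨_, _, 1, Nat.succ_pos _, one_pos, rfl, c₀, hc₀⟩) h
    exact ⟨p, q, c, hp, hq, hlt, hc⟩
  · rintro ⟨p, q, c, hp, hq, hlt, hc⟩
    refine (csInf_le ⟨0, ?_⟩ ⟨p, q, hp, hq, rfl, c, hc⟩ : circChrom G ≤ _).trans_lt hlt
    rintro _ ⟨p, q, -, -, rfl, -⟩
    positivity

/-- Guichard's lemma: `χ_c(G) < p/q` iff there exists a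
`(p,q)`-coloring `c` of `G` with `D_c(G)` acyclic. -/
theorem stmt_8 {V : Type*} [Fintype V] (G : SimpleGraph V) (p q : ℕ)
    (hp : 0 < p) (hq : 0 < q) :
    circChrom G < (p : ℝ) / (q : ℝ) ↔
      ∃ c : V → ℕ, IsCircColoring G p q c ∧ Acyclic (DArc G p q c) := by
  have hqR : (0 : ℝ) < q := by exact_mod_cast hq
  rw [circChrom_lt_iff]
  constructor
  · rintro ⟨p', q', c', hp', hq', hlt, hc'⟩
    rw [div_lt_div_iff₀ (by exact_mod_cast hq') hqR] at hlt
    have hlt' : q * p' < q' * p := by exact_mod_cast (by linarith : (q : ℝ) * p' < q' * p)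
    exact ⟨_, hc'.rescale hp' hq hlt'⟩
  · rintro ⟨c, hc, hac⟩
    have hcol := hc.refine (N := Nat.card V + 1)
      (fun v => Nat.lt_succ_of_le (predCount_le_card _ v)) fun _ _ => predCount_lt_predCount hac
    refine ⟨_, _, _, by positivity, by positivity, ?_, hcol⟩
    rw [div_lt_div_iff₀ (by positivity) hqR]
    push_cast
    nlinarith [(by exact_mod_cast hp : (0 : ℝ) < p)]
end

section
/- Let H be the graph consisting of vertices a, b, c, d together with four copies of K⁻ (K₄ minus an edge), where the pairs of nonadjacent degree-3 vertices of the four copies are identified with the pairs (a,d), (d,b), (b,c), (c,a), respectively, and additionally edges joining each pair among a, b, c, d except ab and cd as inherited from the construction. Then χ(H) = 4. -/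
def HCol : Fin 12 → Fin 4 := ![0,0,1,1,2,3,2,3,2,3,2,3]

lemma hgraph_adj_iff (x y : Fin 12) :
    HGraph.Adj x y ↔ x ≠ y ∧ ((x, y) ∈ HEdges ∨ (y, x) ∈ HEdges) := by
  simp only [HGraph, SimpleGraph.fromRel_adj]

/-- the gadget graph `H` has chromatic number `4`. -/
theorem stmt_9 : HGraph.chromaticNumber = 4 := by
  apply le_antisymm
  · have hc : HGraph.Colorable 4 := by
      refine ⟨SimpleGraph.Coloring.mk HCol ?_⟩
      have key : ∀ x y : Fin 12,
          (x ≠ y ∧ ((x, y) ∈ HEdges ∨ (y, x) ∈ HEdges)) → HCol x ≠ HCol y := by decide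
      intro x y hxy
      exact key x y ((hgraph_adj_iff x y).1 hxy)
    simpa using hc.chromaticNumber_le
  · by_contra h
    push_neg at h
    have h3 : HGraph.chromaticNumber ≤ 3 := Order.le_of_lt_add_one (by exact_mod_cast h)
    rw [show ((3:ℕ∞)) = ((3:ℕ):ℕ∞) by norm_num,
      SimpleGraph.chromaticNumber_le_iff_colorable] at h3
    obtain ⟨C⟩ := h3
    have a03 : HGraph.Adj 0 3 := (hgraph_adj_iff 0 3).2 (by decide)
    have a04 : HGraph.Adj 0 4 := (hgraph_adj_iff 0 4).2 (by decide)
    have a05 : HGraph.Adj 0 5 := (hgraph_adj_iff 0 5).2 (by decide)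
    have a34 : HGraph.Adj 3 4 := (hgraph_adj_iff 3 4).2 (by decide)
    have a35 : HGraph.Adj 3 5 := (hgraph_adj_iff 3 5).2 (by decide)
    have a45 : HGraph.Adj 4 5 := (hgraph_adj_iff 4 5).2 (by decide)
    have h03 := C.valid a03
    have h04 := C.valid a04
    have h05 := C.valid a05
    have h34 := C.valid a34
    have h35 := C.valid a35
    have h45 := C.valid a45
    have b0 := (C 0).isLt
    have b3 := (C 3).isLt
    have b4 := (C 4).isLt
    have b5 := (C 5).isLt
    simp only [Ne, Fin.ext_iff] at h03 h04 h05 h34 h35 h45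
    omega
end

section
/- Let G' be a graph that is not 4-colorable and let G be obtained from G' by replacing every edge of G' with a copy of (H; a, b). Then χ_c(G) = 4. -/
/-! ### Auxiliary lemmas -/

private def fcol : Fin 12 → ℕ := ![0,0,1,1,2,3,2,3,2,3,2,3]

private lemma fcol_lt : ∀ j : Fin 12, fcol j < 4 := by decide

private lemma fcol_proper : ∀ i j : Fin 12, i ≠ j →
    ((i, j) ∈ HEdges ∨ (j, i) ∈ HEdges) → fcol i ≠ fcol j := by decide

private lemma fH {i j : Fin 12} (h : HGraph.Adj i j) : fcol i ≠ fcol j := by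
  rw [HGraph, SimpleGraph.fromRel_adj] at h
  exact fcol_proper i j h.1 h.2

private lemma hH01 : ¬ HGraph.Adj 0 1 := by
  rw [HGraph, SimpleGraph.fromRel_adj]; decide

private lemma hH03 : HGraph.Adj 0 3 := by rw [HGraph, SimpleGraph.fromRel_adj]; decide
private lemma hH04 : HGraph.Adj 0 4 := by rw [HGraph, SimpleGraph.fromRel_adj]; decide
private lemma hH05 : HGraph.Adj 0 5 := by rw [HGraph, SimpleGraph.fromRel_adj]; decide
private lemma hH34 : HGraph.Adj 3 4 := by rw [HGraph, SimpleGraph.fromRel_adj]; decide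
private lemma hH35 : HGraph.Adj 3 5 := by rw [HGraph, SimpleGraph.fromRel_adj]; decide
private lemma hH45 : HGraph.Adj 4 5 := by rw [HGraph, SimpleGraph.fromRel_adj]; decide

/-- Four integers, pairwise at circular distance between `q` and `p - q`,
force `4 q ≤ p`. -/
private lemma k4_bound {p q : ℕ} (a b c d : ℤ)
    (h1 : (q : ℤ) ≤ |a - b| ∧ |a - b| ≤ (p : ℤ) - q)
    (h2 : (q : ℤ) ≤ |a - c| ∧ |a - c| ≤ (p : ℤ) - q)
    (h3 : (q : ℤ) ≤ |a - d| ∧ |a - d| ≤ (p : ℤ) - q)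
    (h4 : (q : ℤ) ≤ |b - c| ∧ |b - c| ≤ (p : ℤ) - q)
    (h5 : (q : ℤ) ≤ |b - d| ∧ |b - d| ≤ (p : ℤ) - q)
    (h6 : (q : ℤ) ≤ |c - d| ∧ |c - d| ≤ (p : ℤ) - q) :
    4 * (q : ℤ) ≤ (p : ℤ) := by
  have e1 := le_abs.mp h1.1; have e1' := abs_le.mp h1.2
  have e2 := le_abs.mp h2.1; have e2' := abs_le.mp h2.2
  have e3 := le_abs.mp h3.1; have e3' := abs_le.mp h3.2
  have e4 := le_abs.mp h4.1; have e4' := abs_le.mp h4.2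
  have e5 := le_abs.mp h5.1; have e5' := abs_le.mp h5.2
  have e6 := le_abs.mp h6.1; have e6' := abs_le.mp h6.2
  omega

private def cUp {V : Type*} : V ⊕ (V × V × {w : Fin 12 // w ≠ 0 ∧ w ≠ 1}) → ℕ
  | Sum.inl _ => 0
  | Sum.inr (_, _, i) => fcol i.1

private lemma cUp_lt {V : Type*} :
    ∀ z : V ⊕ (V × V × {w : Fin 12 // w ≠ 0 ∧ w ≠ 1}), cUp z < 4 := by
  rintro (u | ⟨a, b, i⟩)
  · norm_num [cUp]
  · exact fcol_lt i.1

/-- if `G'` is not `4`-colorable and `G` is obtained from `G'`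
by replacing every edge by `(H; a, b)`, then `χ_c(G) = 4`. -/
theorem stmt_14 {V : Type*} (G' : SimpleGraph V) (o : V → V → Prop)
    (ho : Orients G' o) (h4 : ¬ G'.Colorable 4) :
    circChrom (replaceEdges G' o HGraph 0 1) = 4 := by
  -- G' has an edge, which we may orient via o
  obtain ⟨u, v, huv⟩ : ∃ u v, G'.Adj u v := by
    by_contra h
    push_neg at h
    exact h4 ⟨SimpleGraph.Coloring.mk (fun _ => (0 : Fin 4))
      (fun {a b} hab => absurd hab (h a b))⟩
  obtain ⟨x, y, hxy, hoxy⟩ : ∃ x y, G'.Adj x y ∧ o x y := by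
    by_cases h : o u v
    · exact ⟨u, v, huv, h⟩
    · exact ⟨v, u, huv.symm, (ho huv.symm).mpr h⟩
  -- the four vertices of a K4 inside the gadget copy on the edge xy
  let i3 : {w : Fin 12 // w ≠ 0 ∧ w ≠ 1} := ⟨3, by decide⟩
  let i4 : {w : Fin 12 // w ≠ 0 ∧ w ≠ 1} := ⟨4, by decide⟩
  let i5 : {w : Fin 12 // w ≠ 0 ∧ w ≠ 1} := ⟨5, by decide⟩
  let w0 : V ⊕ (V × V × {w : Fin 12 // w ≠ 0 ∧ w ≠ 1}) := Sum.inl x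
  let w1 : V ⊕ (V × V × {w : Fin 12 // w ≠ 0 ∧ w ≠ 1}) := Sum.inr (x, y, i3)
  let w2 : V ⊕ (V × V × {w : Fin 12 // w ≠ 0 ∧ w ≠ 1}) := Sum.inr (x, y, i4)
  let w3 : V ⊕ (V × V × {w : Fin 12 // w ≠ 0 ∧ w ≠ 1}) := Sum.inr (x, y, i5)
  have a01 : (replaceEdges G' o HGraph 0 1).Adj w0 w1 :=
    (SimpleGraph.fromRel_adj _ _ _).mpr
      ⟨by simp [w0, w1], Or.inl ⟨hxy, hoxy, Or.inl ⟨rfl, hH03⟩⟩⟩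
  have a02 : (replaceEdges G' o HGraph 0 1).Adj w0 w2 :=
    (SimpleGraph.fromRel_adj _ _ _).mpr
      ⟨by simp [w0, w2], Or.inl ⟨hxy, hoxy, Or.inl ⟨rfl, hH04⟩⟩⟩
  have a03 : (replaceEdges G' o HGraph 0 1).Adj w0 w3 :=
    (SimpleGraph.fromRel_adj _ _ _).mpr
      ⟨by simp [w0, w3], Or.inl ⟨hxy, hoxy, Or.inl ⟨rfl, hH05⟩⟩⟩
  have a12 : (replaceEdges G' o HGraph 0 1).Adj w1 w2 :=
    (SimpleGraph.fromRel_adj _ _ _).mpr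
      ⟨by simp [w1, w2, i3, i4], Or.inl ⟨rfl, rfl, hxy, hoxy, hH34⟩⟩
  have a13 : (replaceEdges G' o HGraph 0 1).Adj w1 w3 :=
    (SimpleGraph.fromRel_adj _ _ _).mpr
      ⟨by simp [w1, w3, i3, i5], Or.inl ⟨rfl, rfl, hxy, hoxy, hH35⟩⟩
  have a23 : (replaceEdges G' o HGraph 0 1).Adj w2 w3 :=
    (SimpleGraph.fromRel_adj _ _ _).mpr
      ⟨by simp [w2, w3, i4, i5], Or.inl ⟨rfl, rfl, hxy, hoxy, hH45⟩⟩
  -- every (p,q)-coloring of G satisfies 4 ≤ p / q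
  have hlb : ∀ r ∈ {r : ℝ | ∃ p q : ℕ, 0 < p ∧ 0 < q ∧ r = (p : ℝ) / (q : ℝ) ∧
      ∃ c : V ⊕ (V × V × {w : Fin 12 // w ≠ 0 ∧ w ≠ 1}) → ℕ,
        IsCircColoring (replaceEdges G' o HGraph 0 1) p q c}, (4 : ℝ) ≤ r := by
    rintro r ⟨p, q, hp, hq, rfl, c, hc⟩
    have key : 4 * (q : ℤ) ≤ (p : ℤ) :=
      k4_bound (c w0 : ℤ) (c w1 : ℤ) (c w2 : ℤ) (c w3 : ℤ)
        (hc.2 a01) (hc.2 a02) (hc.2 a03) (hc.2 a12) (hc.2 a13) (hc.2 a23)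
    rw [le_div_iff₀ (by exact_mod_cast hq : (0:ℝ) < (q:ℝ))]
    have : 4 * (q : ℝ) ≤ (p : ℝ) := by exact_mod_cast key
    linarith
  -- an explicit (4,1)-coloring of G
  have hmem : (4 : ℝ) ∈ {r : ℝ | ∃ p q : ℕ, 0 < p ∧ 0 < q ∧ r = (p : ℝ) / (q : ℝ) ∧
      ∃ c : V ⊕ (V × V × {w : Fin 12 // w ≠ 0 ∧ w ≠ 1}) → ℕ,
        IsCircColoring (replaceEdges G' o HGraph 0 1) p q c} := by
    refine ⟨4, 1, by norm_num, by norm_num, by norm_num, cUp, fun z => cUp_lt z, ?_⟩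
    rintro z w hzw
    unfold replaceEdges at hzw
    rw [SimpleGraph.fromRel_adj] at hzw
    obtain ⟨hne, hrel⟩ := hzw
    have hcne : cUp z ≠ cUp w := by
      rcases z with u | ⟨a, b, i⟩ <;> rcases w with u' | ⟨a', b', i'⟩
      · rcases hrel with ⟨_, h⟩ | ⟨_, h⟩ <;> exact absurd h hH01
      · rcases hrel with ⟨_, _, ⟨_, h⟩ | ⟨_, h⟩⟩ | h
        · exact fH h
        · exact fH h
        · exact h.elim
      · rcases hrel with h | ⟨_, _, ⟨_, h⟩ | ⟨_, h⟩⟩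
        · exact h.elim
        · exact fun he => fH h he.symm
        · exact fun he => fH h he.symm
      · rcases hrel with ⟨_, _, _, _, h⟩ | ⟨_, _, _, _, h⟩
        · exact fH h
        · exact fun he => fH h he.symm
    have hm4 : cUp z < 4 := cUp_lt z
    have hn4 : cUp w < 4 := cUp_lt w
    rcases abs_cases ((cUp z : ℤ) - (cUp w : ℤ)) with ⟨h1, _⟩ | ⟨h1, _⟩ <;>
      rw [h1] <;> constructor <;> omega
  rw [circChrom]
  exact le_antisymm (csInf_le ⟨4, fun r hr => hlb r hr⟩ hmem) (le_csInf ⟨4, hmem⟩ hlb)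
end

section
/- Fix integers k ≥ 2 and n ≥ 3. Let K be the graph with vertex set {a, b, v₁, ..., v_{n-1}} where v₁,...,v_{n-1} form a clique, a is adjacent to v₁,...,v_{n-2}, and b is adjacent to v_{n-1}. For integers 0 ≤ x, y ≤ kn - 2, there exists a (kn-1, k)-coloring c of K with c(a) = x and c(b) = y if and only if x ≠ y. -/
/-!
Colors `0, …, kn - 2` are the points of the cycle `ZMod (kn - 1)`, and a `(kn - 1, k)`-coloring
places adjacent vertices at circular distance at least `k`; rotations and reflections of the
cycle preserve colorings.

If `c a = c b`, merging `a` with `b` turns `K` into `K_n`. Its `n` colors are pairwise at least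
`k` apart and lie in an interval of length `(kn - 1) - k < (n - 1) k`, which is impossible by
pigeonhole on the buckets `⌊(c v - min c) / k⌋`.

If `c a ≠ c b`, rotate and reflect so that `a = 0` and `b = e` with `1 ≤ e ≤ (kn - 1) / 2`, put
`v_i` at `i k` for `i ≤ n - 2`, and put `v_{n-1}` at `0` if `k ≤ e` and at `(n - 1) k ≡ -(k - 1)`
otherwise.
-/

open Finset

theorem Int.abs_sub_lt_of_ediv_eq {a b k : ℤ} (hk : 0 < k) (h : a / k = b / k) :
    |a - b| < k := by
  have ha := Int.mul_ediv_add_emod a k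
  have hb := Int.mul_ediv_add_emod b k
  have := Int.emod_nonneg a hk.ne'
  have := Int.emod_nonneg b hk.ne'
  have := Int.emod_lt_of_pos a hk
  have := Int.emod_lt_of_pos b hk
  rw [h] at ha
  rw [abs_sub_lt_iff]
  constructor <;> linarith

theorem le_abs_mul_sub_mul_le (k : ℕ) {i j m : ℕ} (hij : i ≠ j) (hi : i ≤ j + m)
    (hj : j ≤ i + m) :
    (k : ℤ) ≤ |((i * k : ℕ) : ℤ) - (j * k : ℕ)| ∧
      |((i * k : ℕ) : ℤ) - (j * k : ℕ)| ≤ m * k := by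
  push_cast
  rw [← sub_mul, abs_mul, Nat.abs_cast]
  have h1 : 1 ≤ |(i : ℤ) - j| := Int.one_le_abs (sub_ne_zero.mpr (by exact_mod_cast hij))
  have h2 : |(i : ℤ) - j| ≤ m := abs_sub_le_iff.mpr ⟨by omega, by omega⟩
  exact ⟨le_mul_of_one_le_left (Nat.cast_nonneg k) h1,
    mul_le_mul_of_nonneg_right h2 (Nat.cast_nonneg k)⟩

theorem Finset.card_sub_one_mul_le_of_pairwise_sep {ι : Type*} (s : Finset ι) (f : ι → ℤ)
    {k L : ℤ} (hk : 0 < k) (hs : s.Nonempty) (hL : ∀ u ∈ s, ∀ w ∈ s, f u - f w ≤ L)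
    (hsep : ∀ u ∈ s, ∀ w ∈ s, u ≠ w → k ≤ |f u - f w|) :
    (#s - 1 : ℤ) * k ≤ L := by
  obtain ⟨m, hm, hmin⟩ := s.exists_min_image f hs
  by_contra! hlt
  have hmaps : Set.MapsTo (fun u => (f u - f m) / k) s (Icc 0 (L / k)) := fun u hu => by
    simp only [coe_Icc, Set.mem_Icc]
    exact ⟨Int.ediv_nonneg (sub_nonneg.mpr (hmin u hu)) hk.le,
      Int.ediv_le_ediv hk (hL u hu m hm)⟩
  have hcard : #(Icc 0 (L / k)) < #s := by
    have := (Int.ediv_lt_iff_lt_mul hk).mpr hlt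
    have := hs.card_pos
    rw [Int.card_Icc]
    omega
  obtain ⟨u, hu, w, hw, huw, hbucket⟩ := exists_ne_map_eq_of_card_lt_of_maps_to hcard hmaps
  have := Int.abs_sub_lt_of_ediv_eq hk hbucket
  rw [sub_sub_sub_cancel_right] at this
  linarith [hsep u hu w hw huw]

theorem not_isCircColoring_top {V : Type*} [Fintype V] {k : ℕ} (hk : 0 < k)
    (hV : 2 ≤ Fintype.card V) (c : V → ℕ) :
    ¬ IsCircColoring (⊤ : SimpleGraph V) (k * Fintype.card V - 1) k c := by
  rintro ⟨-, hc⟩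
  have hP : ((k * Fintype.card V - 1 : ℕ) : ℤ) = k * Fintype.card V - 1 := by
    have : 1 ≤ k * Fintype.card V := Nat.one_le_iff_ne_zero.mpr (by positivity)
    push_cast [this]
    ring
  have hkV : (2 * k : ℤ) ≤ k * Fintype.card V := by
    exact_mod_cast Nat.mul_comm 2 k ▸ Nat.mul_le_mul_left k hV
  have := univ.card_sub_one_mul_le_of_pairwise_sep (fun v => (c v : ℤ))
    (L := k * Fintype.card V - 1 - k) (by exact_mod_cast hk)
    (univ_nonempty_iff.mpr (Fintype.card_pos_iff.mp (by omega)))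
    (fun u _ w _ => by
      rcases eq_or_ne u w with rfl | huw
      · linarith
      · exact (le_abs_self _).trans (hP ▸ (hc huw).2))
    (fun u _ w _ huw => (hc huw).1)
  rw [card_univ] at this
  linarith

/-- `(a - b).valMinAbs.natAbs` is the distance from `a` to `b` along the cycle `ZMod P`. -/
theorem ZMod.le_natAbs_valMinAbs_sub_iff {P : ℕ} [NeZero P] (k : ℕ) (a b : ZMod P) :
    k ≤ (a - b).valMinAbs.natAbs ↔
      (k : ℤ) ≤ |(a.val : ℤ) - b.val| ∧ |(a.val : ℤ) - b.val| ≤ P - k := by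
  have hsum : ((a - b) + b).val = a.val := by rw [sub_add_cancel]
  have := (a - b).val_lt
  have := b.val_lt
  rw [valMinAbs_natAbs_eq_min, le_abs, abs_le]
  rcases lt_or_ge ((a - b).val + b.val) P with h | h
  · rw [val_add_of_lt h] at hsum
    omega
  · rw [val_add_of_le h] at hsum
    omega

section
variable {V : Type*} {G : SimpleGraph V} {P k : ℕ} [NeZero P]

theorem isCircColoring_val_iff (f : V → ZMod P) :
    IsCircColoring G P k (fun v => (f v).val) ↔
      ∀ ⦃u w⦄, G.Adj u w → k ≤ (f u - f w).valMinAbs.natAbs := by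
  simp only [IsCircColoring, ZMod.le_natAbs_valMinAbs_sub_iff, ZMod.val_lt, implies_true,
    true_and]

theorem IsCircColoring.le_natAbs_valMinAbs_natCast_sub {c : V → ℕ}
    (hc : IsCircColoring G P k c) :
    ∀ ⦃u w⦄, G.Adj u w → k ≤ ((c u : ZMod P) - c w).valMinAbs.natAbs := by
  rw [← isCircColoring_val_iff]
  simpa only [ZMod.val_natCast_of_lt (hc.1 _)] using hc

theorem IsCircColoring.zmod_add_left {c : V → ℕ} (hc : IsCircColoring G P k c) (x : ZMod P) :
    IsCircColoring G P k (fun v => (x + c v).val) := by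
  rw [isCircColoring_val_iff]
  simpa only [add_sub_add_left_eq_sub] using hc.le_natAbs_valMinAbs_natCast_sub

theorem IsCircColoring.zmod_sub_left {c : V → ℕ} (hc : IsCircColoring G P k c) (x : ZMod P) :
    IsCircColoring G P k (fun v => (x - c v).val) := by
  rw [isCircColoring_val_iff]
  intro u w huw
  rw [sub_sub_sub_cancel_left, ← neg_sub, ZMod.natAbs_valMinAbs_neg]
  exact hc.le_natAbs_valMinAbs_natCast_sub huw

end

theorem isCircColoring_fromRel {V : Type*} {r : V → V → Prop} {p q : ℕ} {c : V → ℕ}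
    (hc : ∀ v, c v < p)
    (hr : ∀ ⦃x y⦄, x ≠ y → r x y →
      (q : ℤ) ≤ |(c x : ℤ) - (c y : ℤ)| ∧
        |(c x : ℤ) - (c y : ℤ)| ≤ (p : ℤ) - (q : ℤ)) :
    IsCircColoring (SimpleGraph.fromRel r) p q c := by
  refine ⟨hc, fun x y hxy => ?_⟩
  obtain ⟨hne, h | h⟩ := (SimpleGraph.fromRel_adj _ x y).mp hxy
  · exact hr hne h
  · rw [abs_sub_comm]
    exact hr hne.symm h

theorem kgadget_adj_or_adj_swap {n : ℕ} (hn : 1 ≤ n) {u w : Fin (n + 1)} (hu : u ≠ 1)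
    (hw : w ≠ 1) (huw : u ≠ w) :
    (Kgadget n).Adj u w ∨ (Kgadget n).Adj (Equiv.swap 0 1 u) (Equiv.swap 0 1 w) := by
  have h1 : (1 : Fin (n + 1)).val = 1 := by
    rw [Fin.val_one', Nat.mod_eq_of_lt (by omega)]
  have := u.isLt
  have := w.isLt
  by_cases hu0 : u = 0
  · subst hu0
    rw [Equiv.swap_apply_left, Equiv.swap_apply_of_ne_of_ne huw.symm hw]
    simp only [Kgadget, SimpleGraph.fromRel_adj, Ne, Fin.ext_iff, h1, Fin.val_zero,
      true_and] at hw huw ⊢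
    omega
  by_cases hw0 : w = 0
  · subst hw0
    rw [Equiv.swap_apply_left, Equiv.swap_apply_of_ne_of_ne huw hu]
    simp only [Kgadget, SimpleGraph.fromRel_adj, Ne, Fin.ext_iff, h1, Fin.val_zero,
      true_and] at hu huw ⊢
    omega
  left
  simp only [Kgadget, SimpleGraph.fromRel_adj, Ne, Fin.ext_iff, h1, Fin.val_zero]
    at hu hw hu0 hw0 huw ⊢
  omega

theorem apply_zero_ne_apply_one_of_isCircColoring_kgadget {k n : ℕ} (hk : 0 < k) (hn : 2 ≤ n)
    {c : Fin (n + 1) → ℕ} (hc : IsCircColoring (Kgadget n) (k * n - 1) k c) : c 0 ≠ c 1 := by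
  intro h01
  have hswap : ∀ v, c (Equiv.swap 0 1 v) = c v := fun v => by
    rw [Equiv.swap_apply_def]
    split_ifs with h0 h1
    · rw [h0, h01]
    · rw [h1, h01]
    · rfl
  have hcard : Fintype.card {v : Fin (n + 1) // v ≠ 1} = n := by
    simp [Fintype.card_subtype_compl]
  apply not_isCircColoring_top (V := {v : Fin (n + 1) // v ≠ 1}) hk (by omega) (fun v => c v)
  rw [hcard]
  refine ⟨fun v => hc.1 v, ?_⟩
  rintro ⟨u, hu⟩ ⟨w, hw⟩ huw
  rcases kgadget_adj_or_adj_swap (by omega) hu hw (Subtype.coe_ne_coe.mpr huw.ne) with h | h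
  · exact hc.2 h
  · simpa only [hswap] using hc.2 h

def kgadgetSlot (k n e : ℕ) (v : Fin (n + 1)) : ℕ :=
  if v.val = 0 ∨ (v.val = n ∧ k ≤ e) then 0 else v.val - 1

def kgadgetColoring (k n e : ℕ) (v : Fin (n + 1)) : ℕ :=
  if v.val = 1 then e else kgadgetSlot k n e v * k

theorem kgadgetColoring_of_ne_one {k n e : ℕ} {v : Fin (n + 1)} (hv : v.val ≠ 1) :
    kgadgetColoring k n e v = kgadgetSlot k n e v * k :=
  if_neg hv

theorem kgadgetColoring_lt {k n e : ℕ} (hk : 0 < k) (hn : 2 ≤ n) (he : 0 < e)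
    (hek : e + k ≤ k * n - 1) (v : Fin (n + 1)) : kgadgetColoring k n e v < k * n - 1 := by
  have hnk : 2 * k ≤ k * n := Nat.mul_comm 2 k ▸ Nat.mul_le_mul_left k hn
  have := v.isLt
  unfold kgadgetColoring kgadgetSlot
  split_ifs
  · omega
  · omega
  · zify [show 1 ≤ v.val by omega, show 1 ≤ k * n by omega] at *
    rcases (show v.val + 1 ≤ (n : ℤ) ∨ (v.val = (n : ℤ) ∧ e < k) by omega)
      with h | ⟨h, h'⟩
    · nlinarith
    · nlinarith

theorem isCircColoring_kgadgetColoring {k n e : ℕ} (hk : 0 < k) (hn : 3 ≤ n) (he : 0 < e)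
    (hek : e + k ≤ k * n - 1) :
    IsCircColoring (Kgadget n) (k * n - 1) k (kgadgetColoring k n e) := by
  have hP : ((k * n - 1 : ℕ) : ℤ) = k * n - 1 := by
    have : 1 ≤ k * n := Nat.one_le_iff_ne_zero.mpr (by positivity)
    push_cast [this]
    ring
  have hsep : ∀ {i j : ℕ}, i ≠ j → i ≤ j + (n - 2) → j ≤ i + (n - 2) →
      (k : ℤ) ≤ |((i * k : ℕ) : ℤ) - (j * k : ℕ)| ∧
        |((i * k : ℕ) : ℤ) - (j * k : ℕ)| ≤ k * n - 1 - k := fun hij hi hj => by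
    obtain ⟨h1, h2⟩ := le_abs_mul_sub_mul_le k hij hi hj
    refine ⟨h1, h2.trans ?_⟩
    push_cast [show 2 ≤ n by omega]
    nlinarith
  refine isCircColoring_fromRel (kgadgetColoring_lt hk (by omega) he hek) fun u w huw h => ?_
  rw [hP]
  rw [Ne, Fin.ext_iff] at huw
  by_cases hu1 : u.val = 1
  · have hwn : w.val = n := by omega
    have hek' : (e : ℤ) + k ≤ k * n - 1 := by
      rw [← hP]
      exact_mod_cast hek
    rw [show kgadgetColoring k n e u = e from if_pos hu1, kgadgetColoring_of_ne_one (by omega),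
      kgadgetSlot]
    split_ifs with hw
    · rw [zero_mul, Nat.cast_zero, sub_zero, abs_of_nonneg (Nat.cast_nonneg e)]
      exact ⟨by exact_mod_cast (show k ≤ e by omega), by linarith⟩
    · have hek_lt : e < k := by omega
      push_cast [show 1 ≤ w.val by omega]
      rw [hwn, abs_sub_comm, abs_of_nonneg (by nlinarith)]
      constructor <;> nlinarith
  · rw [kgadgetColoring_of_ne_one hu1, kgadgetColoring_of_ne_one (by omega)]
    apply hsep <;> unfold kgadgetSlot <;> split_ifs <;> omega

theorem exists_isCircColoring_kgadget {k n x y : ℕ} (hk : 0 < k) (hn : 3 ≤ n)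
    (hx : x < k * n - 1) (hy : y < k * n - 1) (hxy : x ≠ y) :
    ∃ c : Fin (n + 1) → ℕ,
      IsCircColoring (Kgadget n) (k * n - 1) k c ∧ c 0 = x ∧ c 1 = y := by
  have : NeZero (k * n - 1) := ⟨by omega⟩
  set d : ZMod (k * n - 1) := y - x
  set e := d.valMinAbs.natAbs
  have hd : d ≠ 0 := fun h => hxy <| by
    rw [← ZMod.val_natCast_of_lt hx, ← ZMod.val_natCast_of_lt hy, ← sub_eq_zero.mp h]
  have he : 0 < e := Int.natAbs_pos.mpr ((ZMod.valMinAbs_eq_zero d).not.mpr hd)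
  have hek : e + k ≤ k * n - 1 := by
    have := ZMod.natAbs_valMinAbs_le d
    have := Nat.mul_comm 3 k ▸ Nat.mul_le_mul_left k hn
    omega
  have hc := isCircColoring_kgadgetColoring hk hn he hek
  have hc0 : kgadgetColoring k n e 0 = 0 := by simp [kgadgetColoring, kgadgetSlot]
  have hc1 : kgadgetColoring k n e 1 = e :=
    if_pos (by rw [Fin.val_one', Nat.mod_eq_of_lt (by omega)])
  have he_cast := ZMod.natCast_natAbs_valMinAbs d
  split_ifs at he_cast
  · refine ⟨_, hc.zmod_add_left x, ?_, ?_⟩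
    · rw [hc0, Nat.cast_zero, add_zero, ZMod.val_natCast_of_lt hx]
    · rw [hc1, he_cast, add_sub_cancel, ZMod.val_natCast_of_lt hy]
  · refine ⟨_, hc.zmod_sub_left x, ?_, ?_⟩
    · rw [hc0, Nat.cast_zero, sub_zero, ZMod.val_natCast_of_lt hx]
    · rw [hc1, he_cast, sub_neg_eq_add, add_sub_cancel, ZMod.val_natCast_of_lt hy]

/-- for `k ≥ 2`, `n ≥ 3` and `0 ≤ x, y ≤ kn - 2`, the gadget `K`
has a `(kn-1, k)`-coloring `c` with `c a = x` and `c b = y` iff `x ≠ y`. -/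
theorem stmt_15 (k n : ℕ) (hk : 2 ≤ k) (hn : 3 ≤ n) (x y : ℕ)
    (hx : x ≤ k * n - 2) (hy : y ≤ k * n - 2) :
    (∃ c : Fin (n + 1) → ℕ, IsCircColoring (Kgadget n) (k * n - 1) k c ∧
      c 0 = x ∧ c 1 = y) ↔ x ≠ y := by
  have hkn : 6 ≤ k * n := Nat.mul_le_mul hk hn
  constructor
  · rintro ⟨c, hc, rfl, rfl⟩
    exact apply_zero_ne_apply_one_of_isCircColoring_kgadget (by omega) (by omega) hc
  · exact exists_isCircColoring_kgadget (by omega) hn (by omega) (by omega)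
end

section
/- Fix integers k ≥ 2 and n ≥ 3, and let K be the gadget graph on {a, b, v₁,...,v_{n-1}} with v₁,...,v_{n-1} a clique, a adjacent to v₁,...,v_{n-2}, and b adjacent to v_{n-1}. In every proper (n-1)-coloring of K, vertices a and b receive different colors. -/
/-- for `k ≥ 2`, `n ≥ 3`, in every proper `(n-1)`-coloring of the
gadget `K`, the vertices `a` and `b` receive different colors. -/
theorem stmt_16 (k n : ℕ) (hk : 2 ≤ k) (hn : 3 ≤ n) (c : Fin (n + 1) → ℕ)
    (hlt : ∀ v, c v < n - 1) (hc : ∀ ⦃u v⦄, (Kgadget n).Adj u v → c u ≠ c v) :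
    c 0 ≠ c 1 := by

  intro h01
  have hn1 : 0 < n - 1 := by omega
  have hadj : ∀ u v : Fin (n+1), u ≠ v →
      ((2 ≤ u.val ∧ 2 ≤ v.val) ∨ (u.val = 0 ∧ 2 ≤ v.val ∧ v.val ≤ n - 1) ∨
        (u.val = 1 ∧ v.val = n)) → (Kgadget n).Adj u v := by
    intro u v huv h
    rw [Kgadget, SimpleGraph.fromRel_adj]
    exact ⟨huv, Or.inl h⟩
  set f : Fin (n-1) → Fin (n-1) := fun i => ⟨c ⟨i.val+2, by omega⟩, hlt _⟩ with hf
  have hinj : Function.Injective f := by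
    intro i j hij
    by_contra hne
    have hij' : c ⟨i.val+2, by omega⟩ = c ⟨j.val+2, by omega⟩ :=
      congrArg Fin.val hij
    exact hc (hadj ⟨i.val+2, by omega⟩ ⟨j.val+2, by omega⟩
      (by simp [Fin.ext_iff]; omega)
      (Or.inl ⟨by simp, by simp⟩)) hij'
  have hsurj : Function.Surjective f := Finite.surjective_of_injective hinj
  obtain ⟨i, hi⟩ := hsurj ⟨c 0, hlt 0⟩
  have hi' : c ⟨i.val+2, by omega⟩ = c 0 := congrArg Fin.val hi
  have h0 : (0 : Fin (n+1)).val = 0 := by simp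
  have h1 : (1 : Fin (n+1)).val = 1 := by
    rw [Fin.val_one', Nat.mod_eq_of_lt (by omega)]
  by_cases hcase : i.val + 2 ≤ n - 1
  · exact hc (hadj 0 ⟨i.val+2, by omega⟩ (by simp [Fin.ext_iff])
      (Or.inr (Or.inl ⟨h0, Nat.le_add_left 2 i.val, hcase⟩))) hi'.symm
  · have hiv : i.val + 2 = n := by omega
    have : c 1 ≠ c ⟨i.val+2, by omega⟩ :=
      hc (hadj 1 ⟨i.val+2, by omega⟩
        (Fin.ne_of_val_ne (by rw [h1, Fin.val_mk]; omega))
        (Or.inr (Or.inr ⟨h1, hiv⟩)))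
    exact this (by rw [hi', ← h01])
end

section
/- Fix integers k ≥ 2 and n ≥ 3. Let G' be any graph and let G be obtained from the disjoint union G' ⊔ K_n by replacing every edge uv by the gadget (K; a, b). Then χ(G) = n. -/
section aux
variable {n : ℕ}

lemma kg_val_one (hn : 3 ≤ n) : (1 : Fin (n+1)).val = 1 := by
  rw [Fin.val_one']; exact Nat.mod_eq_of_lt (by omega)

lemma kg_clique (hn : 3 ≤ n) {i j : Fin (n+1)} (hi : 2 ≤ i.val) (hj : 2 ≤ j.val)
    (hij : i ≠ j) : (Kgadget n).Adj i j := by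
  rw [Kgadget, SimpleGraph.fromRel_adj]
  exact ⟨hij, Or.inl (Or.inl ⟨hi, hj⟩)⟩

lemma kg_a (hn : 3 ≤ n) {j : Fin (n+1)} (hj1 : 2 ≤ j.val) (hj2 : j.val ≤ n - 1) :
    (Kgadget n).Adj 0 j := by
  rw [Kgadget, SimpleGraph.fromRel_adj]
  refine ⟨fun h => ?_, Or.inl (Or.inr (Or.inl ⟨rfl, hj1, hj2⟩))⟩
  have : (0:ℕ) = j.val := congrArg Fin.val h
  omega

lemma kg_b (hn : 3 ≤ n) {j : Fin (n+1)} (hj : j.val = n) :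
    (Kgadget n).Adj 1 j := by
  rw [Kgadget, SimpleGraph.fromRel_adj]
  refine ⟨fun h => ?_, Or.inl (Or.inr (Or.inr ⟨kg_val_one hn, hj⟩))⟩
  have := congrArg Fin.val h
  rw [kg_val_one hn] at this
  omega

lemma kg_not01 (hn : 3 ≤ n) : ¬ (Kgadget n).Adj 0 1 := by
  rw [Kgadget, SimpleGraph.fromRel_adj]
  rintro ⟨-, h | h⟩ <;>
    simp only [Fin.val_zero, kg_val_one hn] at h <;> omega

/-- internal vertex of the gadget with value `m`. -/
def iv (n : ℕ) (hn : 3 ≤ n) (m : ℕ) (h2 : 2 ≤ m) (hm : m ≤ n) :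
    {w : Fin (n+1) // w ≠ 0 ∧ w ≠ 1} :=
  ⟨⟨m, by omega⟩,
    fun h => by have : m = 0 := congrArg Fin.val h; omega,
    fun h => by
      have h1 : m = 1 % (n+1) := congrArg Fin.val h
      rw [Nat.mod_eq_of_lt (by omega)] at h1; omega⟩

@[simp] lemma iv_val (hn : 3 ≤ n) (m : ℕ) (h2 : 2 ≤ m) (hm : m ≤ n) :
    (iv n hn m h2 hm).1.val = m := rfl

/-- the canonical `n`-coloring used for the upper bound. -/
def upcol {A B : Type*} (n : ℕ) (hn : 3 ≤ n) :
    A ⊕ (B × B × {w : Fin (n+1) // w ≠ 0 ∧ w ≠ 1}) → Fin n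
  | Sum.inl _ => ⟨0, by omega⟩
  | Sum.inr (_, _, i) => ⟨i.1.val - 1, by have := i.1.isLt; omega⟩

end aux

/-- for `k ≥ 2`, `n ≥ 3`, if `G` is obtained from `G' ⊔ K_n` by
replacing every edge by the gadget `(K; a, b)`, then `χ(G) = n`. -/
theorem stmt_17 {V : Type*} (k n : ℕ) (hk : 2 ≤ k) (hn : 3 ≤ n)
    (G' : SimpleGraph V) (o : V ⊕ Fin n → V ⊕ Fin n → Prop)
    (ho : Orients (disjUnion G' (⊤ : SimpleGraph (Fin n))) o) :
    (replaceEdges (disjUnion G' (⊤ : SimpleGraph (Fin n))) o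
      (Kgadget n) 0 1).chromaticNumber = n := by
  classical
  set GU := disjUnion G' (⊤ : SimpleGraph (Fin n)) with hGU
  set Gr := replaceEdges GU o (Kgadget n) 0 1 with hGrdef
  have hival : ∀ i : {w : Fin (n+1) // w ≠ 0 ∧ w ≠ 1}, 2 ≤ i.1.val := by
    intro i
    have hv0 : i.1.val ≠ 0 := fun h => i.2.1 (Fin.ext h)
    have hv1 : i.1.val ≠ 1 := fun h => i.2.2 (Fin.ext (h.trans (kg_val_one hn).symm))
    omega
  -- Upper bound: n-coloring
  have hcoln : Gr.Colorable n := by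
    refine ⟨SimpleGraph.Coloring.mk (upcol n hn) ?_⟩
    rintro z w hadj heq
    simp only [hGrdef, replaceEdges, SimpleGraph.fromRel_adj] at hadj
    obtain ⟨hne, h | h⟩ := hadj
    · rcases z with u | ⟨x, y, i⟩ <;> rcases w with v | ⟨x', y', j⟩
      · exact kg_not01 hn h.2
      · have h2 : 2 ≤ j.1.val := hival j
        simp only [upcol, Fin.mk.injEq] at heq
        omega
      · exact h
      · obtain ⟨rfl, rfl, -, -, hadjk⟩ := h
        have hij : i.1 ≠ j.1 := hadjk.ne
        have h2i := hival i; have h2j := hival j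
        simp only [upcol, Fin.mk.injEq] at heq
        exact hij (Fin.ext (by omega))
    · rcases z with u | ⟨x, y, i⟩ <;> rcases w with v | ⟨x', y', j⟩
      · exact kg_not01 hn h.2
      · exact h
      · have h2 : 2 ≤ i.1.val := hival i
        simp only [upcol, Fin.mk.injEq] at heq
        omega
      · obtain ⟨rfl, rfl, -, -, hadjk⟩ := h
        have hij : j.1 ≠ i.1 := hadjk.ne
        have h2i := hival i; have h2j := hival j
        simp only [upcol, Fin.mk.injEq] at heq
        exact hij (Fin.ext (by omega))
  -- Lower bound: not (n-1)-colorable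
  have hnotcol : ¬ Gr.Colorable (n - 1) := by
    rintro ⟨c⟩
    have key : ∀ x y : V ⊕ Fin n, GU.Adj x y → o x y →
        c (Sum.inl x) ≠ c (Sum.inl y) := by
      intro x y hxy hoxy
      set g : Fin (n-1) → Fin (n-1) := fun i =>
        c (Sum.inr (x, y, iv n hn (i.val + 2) (by omega) (by omega))) with hg
      have hadj_int : ∀ (i j : {w : Fin (n+1) // w ≠ 0 ∧ w ≠ 1}),
          (Kgadget n).Adj i.1 j.1 →
          Gr.Adj (Sum.inr (x, y, i)) (Sum.inr (x, y, j)) := by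
        intro i j hij
        refine (SimpleGraph.fromRel_adj _ _ _).mpr
          ⟨fun h => ?_, Or.inl ⟨rfl, rfl, hxy, hoxy, hij⟩⟩
        apply hij.ne
        have h2 := Sum.inr.inj h
        have := (Prod.ext_iff.mp ((Prod.ext_iff.mp h2).2)).2
        exact congrArg Subtype.val this
      have hginj : Function.Injective g := by
        intro i j hij
        by_contra hne
        have hvne : (iv n hn (i.val+2) (by omega) (by omega)).1
            ≠ (iv n hn (j.val+2) (by omega) (by omega)).1 := by
          intro h
          have := congrArg Fin.val h
          simp only [iv_val] at this
          exact hne (Fin.ext (by omega))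
        exact c.valid
          (hadj_int _ _ (kg_clique hn (by simp) (by simp) hvne)) hij
      have hgsurj : Function.Surjective g := Finite.injective_iff_surjective.mp hginj
      have hax : ∀ i : Fin (n-1), i.val < n - 2 → c (Sum.inl x) ≠ g i := by
        intro i hi
        have hadjK : (Kgadget n).Adj 0 (iv n hn (i.val+2) (by omega) (by omega)).1 :=
          kg_a hn (by simp) (by simp; omega)
        exact c.valid ((SimpleGraph.fromRel_adj _ _ _).mpr
          ⟨by simp, Or.inl ⟨hxy, hoxy, Or.inl ⟨rfl, hadjK⟩⟩⟩)
      obtain ⟨i, hgi⟩ := hgsurj (c (Sum.inl x))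
      have hilast : i.val = n - 2 := by
        by_contra h
        exact hax i (by have := i.isLt; omega) hgi.symm
      have hadjK : (Kgadget n).Adj 1 (iv n hn (i.val+2) (by omega) (by omega)).1 :=
        kg_b hn (by simp; omega)
      have hyadj : Gr.Adj (Sum.inl y)
          (Sum.inr (x, y, iv n hn (i.val+2) (by omega) (by omega))) :=
        (SimpleGraph.fromRel_adj _ _ _).mpr
          ⟨by simp, Or.inl ⟨hxy, hoxy, Or.inr ⟨rfl, hadjK⟩⟩⟩
      have hby : c (Sum.inl y) ≠ g i := c.valid hyadj
      rw [hgi] at hby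
      exact fun h => hby h.symm
    have hinj : Function.Injective (fun a : Fin n => c (Sum.inl (Sum.inr a))) := by
      intro a b hab
      by_contra hne
      have hadj : GU.Adj (Sum.inr a) (Sum.inr b) :=
        (SimpleGraph.fromRel_adj _ _ _).mpr
          ⟨fun h => hne (Sum.inr.inj h), Or.inl hne⟩
      by_cases hoab : o (Sum.inr a) (Sum.inr b)
      · exact key _ _ hadj hoab hab
      · have : o (Sum.inr b) (Sum.inr a) := by
          by_contra h
          exact hoab ((ho hadj).mpr h)
        exact key _ _ hadj.symm this hab.symm
    have hcard := Fintype.card_le_of_injective _ hinj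
    simp only [Fintype.card_fin] at hcard
    omega
  -- conclude
  have hle := hcoln.chromaticNumber_le
  refine le_antisymm hle ?_
  by_contra h
  push_neg at h
  obtain ⟨m, hm, hmn'⟩ := ENat.le_coe_iff.mp hle
  have hmn : m < n := by rw [hm] at h; exact_mod_cast h
  have hle' : Gr.chromaticNumber ≤ ((n-1 : ℕ) : ℕ∞) := by
    rw [hm]
    exact Nat.cast_le.mpr (by omega)
  exact hnotcol (SimpleGraph.chromaticNumber_le_iff_colorable.mp hle')
end

section
/- Fix integers k ≥ 2 and n ≥ 3. Let G' be a graph and G obtained from G' ⊔ K_n by replacing every edge with the gadget (K; a, b). If χ(G') ≤ kn - 1, then G admits a (kn-1, k)-coloring; hence χ_c(G) ≤ n - 1/k. -/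
private lemma circ_abs {p k a b : ℕ} (ha : a < p) (hb : b < p)
    (h1 : (k:ℤ) ≤ ((a:ℤ) - b) % p) (h2 : ((a:ℤ) - b) % p ≤ (p:ℤ) - k) :
    (k:ℤ) ≤ |(a:ℤ) - b| ∧ |(a:ℤ) - b| ≤ (p:ℤ) - k := by
  have hp : (0:ℤ) < p := by exact_mod_cast Nat.pos_of_ne_zero (by omega)
  have ha' : (a:ℤ) < p := by exact_mod_cast ha
  have hb' : (b:ℤ) < p := by exact_mod_cast hb
  have ha0 : (0:ℤ) ≤ a := Int.natCast_nonneg a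
  have hb0 : (0:ℤ) ≤ b := Int.natCast_nonneg b
  rcases le_or_gt (b:ℤ) a with hle | hlt
  · have he : ((a:ℤ) - b) % p = a - b := Int.emod_eq_of_lt (by omega) (by omega)
    rw [he] at h1 h2
    rw [abs_of_nonneg (by omega)]
    exact ⟨h1, h2⟩
  · have h0 : ((a:ℤ) - b + p) % p = ((a:ℤ) - b) % p := by
      simpa using Int.add_mul_emod_self_left ((a:ℤ) - b) p 1
    have he : ((a:ℤ) - b) % p = a - b + p := by
      rw [← h0, Int.emod_eq_of_lt (by omega) (by omega)]
    rw [he] at h1 h2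
    rw [abs_of_neg (by omega)]
    constructor <;> omega

private lemma emod_window {P K W a b : ℤ} (hP : 0 < P) (hK : 0 < K)
    (heq : (a - b) % P = W % P)
    (h : (K ≤ W ∧ W ≤ P - K) ∨ (K - P ≤ W ∧ W ≤ -K)) :
    K ≤ (a - b) % P ∧ (a - b) % P ≤ P - K := by
  rw [heq]
  rcases h with ⟨h1, h2⟩ | ⟨h1, h2⟩
  · rw [Int.emod_eq_of_lt (by omega) (by omega)]; exact ⟨h1, h2⟩
  · have h0 : (W + P) % P = W % P := by
      simpa using Int.add_mul_emod_self_left W P 1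
    rw [← h0, Int.emod_eq_of_lt (by omega) (by omega)]
    omega

private lemma modeq_shift {P a W : ℤ} (c : ℤ) (h : a = W + P * c) : a % P = W % P := by
  subst h; exact Int.add_mul_emod_self_left W P c

private lemma emod_sub_left (a b n : ℤ) : (a % n - b) % n = (a - b) % n := by
  rw [Int.sub_emod, Int.emod_emod_of_dvd _ dvd_rfl, ← Int.sub_emod]

private lemma emod_sub_right (a b n : ℤ) : (a - b % n) % n = (a - b) % n := by
  rw [Int.sub_emod, Int.emod_emod_of_dvd _ dvd_rfl, ← Int.sub_emod]

private lemma emod_sub_both (a b n : ℤ) : (a % n - b % n) % n = (a - b) % n :=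
  (Int.sub_emod a b n).symm

/-- the gadget colouring as a function of the vertex index -/
def gcol (k n : ℕ) (X Y D P : ℤ) (m : ℕ) : ℤ :=
  if m = 0 then X else if m = 1 then Y
  else if (k:ℤ) ≤ D then
    (if m = n then (if D ≤ P - k then X else (X + 1 - (k:ℤ)) % P)
     else (X + ((m:ℤ) - 1) * k) % P)
  else (if m = n then (Y + (k:ℤ)) % P else (Y + (m:ℤ) * k) % P)

lemma gcol_bounds {k n : ℕ} {X Y D P : ℤ} (hP : 0 < P) (hX0 : 0 ≤ X) (hXP : X < P)
    (hY0 : 0 ≤ Y) (hYP : Y < P) (m : ℕ) :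
    0 ≤ gcol k n X Y D P m ∧ gcol k n X Y D P m < P := by
  unfold gcol
  split_ifs <;>
    first
      | exact ⟨hX0, hXP⟩
      | exact ⟨hY0, hYP⟩
      | exact ⟨Int.emod_nonneg _ (by omega), Int.emod_lt_of_pos _ hP⟩

set_option maxHeartbeats 1000000 in
lemma gadget_coloring (k n : ℕ) (hk : 2 ≤ k) (hn : 3 ≤ n)
    (X Y : ℕ) (hX : X < k * n - 1) (hY : Y < k * n - 1) (hXY : X ≠ Y) :
    ∃ g : Fin (n + 1) → ℕ, g 0 = X ∧ g 1 = Y ∧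
      IsCircColoring (Kgadget n) (k * n - 1) k g := by
  have hkn : 6 ≤ k * n := le_trans (by norm_num) (Nat.mul_le_mul hk hn)
  set p : ℕ := k * n - 1 with hp
  have hppos : 0 < p := by omega
  have hP : (0:ℤ) < (p:ℤ) := by exact_mod_cast hppos
  have hPval : ((p:ℕ):ℤ) = (k:ℤ) * n - 1 := by
    have h1 : ((k*n : ℕ):ℤ) = (k:ℤ) * n := by push_cast; ring
    omega
  have hK2 : (2:ℤ) ≤ (k:ℤ) := by exact_mod_cast hk
  have hN3 : (3:ℤ) ≤ (n:ℤ) := by exact_mod_cast hn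
  have hk0 : (0:ℤ) < (k:ℤ) := by omega
  have hXP : (X:ℤ) < (p:ℤ) := by exact_mod_cast hX
  have hYP : (Y:ℤ) < (p:ℤ) := by exact_mod_cast hY
  have hX0 : (0:ℤ) ≤ (X:ℤ) := Int.natCast_nonneg X
  have hY0 : (0:ℤ) ≤ (Y:ℤ) := Int.natCast_nonneg Y
  have hXY' : (X:ℤ) ≠ (Y:ℤ) := by exact_mod_cast fun h' => hXY h'
  obtain ⟨D, q, hD0', hDP, hq⟩ : ∃ D q : ℤ, 0 ≤ D ∧ D < (p:ℤ) ∧ (X:ℤ) - Y = D + (p:ℤ) * q :=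
    ⟨((X:ℤ) - Y) % p, ((X:ℤ) - Y) / p, Int.emod_nonneg _ (by omega),
      Int.emod_lt_of_pos _ hP, (Int.emod_add_mul_ediv _ _).symm⟩
  have hD0 : 0 < D := by
    rcases eq_or_lt_of_le hD0' with h' | h'
    · exfalso; apply hXY'
      rcases lt_trichotomy q 0 with hc | hc | hc
      · exfalso
        have hm : (0:ℤ) ≤ (p:ℤ) * (-q - 1) := mul_nonneg hP.le (by omega)
        linarith
      · rw [hc, mul_zero, add_zero] at hq; omega
      · exfalso
        have hm : (0:ℤ) ≤ (p:ℤ) * (q - 1) := mul_nonneg hP.le (by omega)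
        linarith
    · exact h'
  have e0 : gcol k n (X:ℤ) (Y:ℤ) D p 0 = (X:ℤ) := by simp [gcol]
  have e1 : gcol k n (X:ℤ) (Y:ℤ) D p 1 = (Y:ℤ) := by simp [gcol]
  have emid : ∀ m : ℕ, 2 ≤ m → m < n →
      gcol k n (X:ℤ) (Y:ℤ) D p m =
        (if (k:ℤ) ≤ D then ((X:ℤ) + ((m:ℤ) - 1) * k) % p else ((Y:ℤ) + (m:ℤ) * k) % p) := by
    intro m h1 h2
    have hm0 : m ≠ 0 := by omega
    have hm1 : m ≠ 1 := by omega
    have hmn : m ≠ n := by omega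
    simp [gcol, hm0, hm1, hmn]
  have etop : gcol k n (X:ℤ) (Y:ℤ) D p n =
      (if (k:ℤ) ≤ D then (if D ≤ (p:ℤ) - k then (X:ℤ) else ((X:ℤ) + 1 - (k:ℤ)) % p)
       else ((Y:ℤ) + (k:ℤ)) % p) := by
    have hm0 : n ≠ 0 := by omega
    have hm1 : n ≠ 1 := by omega
    simp [gcol, hm0, hm1]
  have main : ∀ mx my : ℕ, mx ≤ n → my ≤ n → mx ≠ my →
      ((2 ≤ mx ∧ 2 ≤ my) ∨ (mx = 0 ∧ 2 ≤ my ∧ my ≤ n - 1) ∨ (mx = 1 ∧ my = n)) →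
      (k:ℤ) ≤ (gcol k n (X:ℤ) (Y:ℤ) D p my - gcol k n (X:ℤ) (Y:ℤ) D p mx) % p ∧
        (gcol k n (X:ℤ) (Y:ℤ) D p my - gcol k n (X:ℤ) (Y:ℤ) D p mx) % p ≤ (p:ℤ) - k := by
    intro mx my hmxn hmyn hne hrel
    rcases hrel with ⟨h2x, h2y⟩ | ⟨h0x, h2y, hyn1⟩ | ⟨h1x, hyn⟩
    · -- clique case
      by_cases hAB : (k:ℤ) ≤ D
      · by_cases hxn : mx = n
        · rw [hxn, emid my h2y (by omega), etop, if_pos hAB, if_pos hAB]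
          have c1 : (2:ℤ) ≤ (my:ℤ) := by omega
          have c2 : (my:ℤ) ≤ (n:ℤ) - 1 := by omega
          have m1 := mul_le_mul_of_nonneg_right c1 hk0.le
          have m2 := mul_le_mul_of_nonneg_right c2 hk0.le
          by_cases hDs : D ≤ (p:ℤ) - k
          · rw [if_pos hDs]
            refine emod_window hP hk0 (W := ((my:ℤ) - 1) * k) ?_
              (Or.inl ⟨by linarith, by linarith⟩)
            rw [emod_sub_left]; exact modeq_shift 0 (by ring)
          · rw [if_neg hDs]
            refine emod_window hP hk0 (W := (my:ℤ) * k - 1) ?_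
              (Or.inl ⟨by linarith, by linarith⟩)
            rw [emod_sub_both]; exact modeq_shift 0 (by ring)
        · by_cases hyn : my = n
          · rw [hyn, emid mx h2x (by omega), etop, if_pos hAB, if_pos hAB]
            have c1 : (2:ℤ) ≤ (mx:ℤ) := by omega
            have c2 : (mx:ℤ) ≤ (n:ℤ) - 1 := by omega
            have m1 := mul_le_mul_of_nonneg_right c1 hk0.le
            have m2 := mul_le_mul_of_nonneg_right c2 hk0.le
            by_cases hDs : D ≤ (p:ℤ) - k
            · rw [if_pos hDs]
              refine emod_window hP hk0 (W := -(((mx:ℤ) - 1) * k)) ?_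
                (Or.inr ⟨by linarith, by linarith⟩)
              rw [emod_sub_right]; exact modeq_shift 0 (by ring)
            · rw [if_neg hDs]
              refine emod_window hP hk0 (W := 1 - (mx:ℤ) * k) ?_
                (Or.inr ⟨by linarith, by linarith⟩)
              rw [emod_sub_both]; exact modeq_shift 0 (by ring)
          · rw [emid mx h2x (by omega), emid my h2y (by omega), if_pos hAB, if_pos hAB]
            have c1 : (2:ℤ) ≤ (mx:ℤ) := by omega
            have c2 : (mx:ℤ) ≤ (n:ℤ) - 1 := by omega
            have c3 : (2:ℤ) ≤ (my:ℤ) := by omega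
            have c4 : (my:ℤ) ≤ (n:ℤ) - 1 := by omega
            refine emod_window hP hk0 (W := ((my:ℤ) - (mx:ℤ)) * k) ?_ ?_
            · rw [emod_sub_both]; exact modeq_shift 0 (by ring)
            · rcases lt_or_gt_of_ne hne with hlt | hlt
              · have c5 : (1:ℤ) ≤ (my:ℤ) - mx := by omega
                have m1 := mul_le_mul_of_nonneg_right c5 hk0.le
                have m2 := mul_le_mul_of_nonneg_right
                  (show (my:ℤ) - mx ≤ (n:ℤ) - 3 by omega) hk0.le
                exact Or.inl ⟨by linarith, by linarith⟩
              · have c5 : (1:ℤ) ≤ (mx:ℤ) - my := by omega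
                have m1 := mul_le_mul_of_nonneg_right c5 hk0.le
                have m2 := mul_le_mul_of_nonneg_right
                  (show (mx:ℤ) - my ≤ (n:ℤ) - 3 by omega) hk0.le
                exact Or.inr ⟨by linarith, by linarith⟩
      · by_cases hxn : mx = n
        · rw [hxn, emid my h2y (by omega), etop, if_neg hAB, if_neg hAB]
          have c1 : (2:ℤ) ≤ (my:ℤ) := by omega
          have c2 : (my:ℤ) ≤ (n:ℤ) - 1 := by omega
          have m1 := mul_le_mul_of_nonneg_right c1 hk0.le
          have m2 := mul_le_mul_of_nonneg_right c2 hk0.le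
          refine emod_window hP hk0 (W := ((my:ℤ) - 1) * k) ?_
            (Or.inl ⟨by linarith, by linarith⟩)
          rw [emod_sub_both]; exact modeq_shift 0 (by ring)
        · by_cases hyn : my = n
          · rw [hyn, emid mx h2x (by omega), etop, if_neg hAB, if_neg hAB]
            have c1 : (2:ℤ) ≤ (mx:ℤ) := by omega
            have c2 : (mx:ℤ) ≤ (n:ℤ) - 1 := by omega
            have m1 := mul_le_mul_of_nonneg_right c1 hk0.le
            have m2 := mul_le_mul_of_nonneg_right c2 hk0.le
            refine emod_window hP hk0 (W := (1 - (mx:ℤ)) * k) ?_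
              (Or.inr ⟨by linarith, by linarith⟩)
            rw [emod_sub_both]; exact modeq_shift 0 (by ring)
          · rw [emid mx h2x (by omega), emid my h2y (by omega), if_neg hAB, if_neg hAB]
            have c1 : (2:ℤ) ≤ (mx:ℤ) := by omega
            have c2 : (mx:ℤ) ≤ (n:ℤ) - 1 := by omega
            have c3 : (2:ℤ) ≤ (my:ℤ) := by omega
            have c4 : (my:ℤ) ≤ (n:ℤ) - 1 := by omega
            refine emod_window hP hk0 (W := ((my:ℤ) - (mx:ℤ)) * k) ?_ ?_
            · rw [emod_sub_both]; exact modeq_shift 0 (by ring)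
            · rcases lt_or_gt_of_ne hne with hlt | hlt
              · have c5 : (1:ℤ) ≤ (my:ℤ) - mx := by omega
                have m1 := mul_le_mul_of_nonneg_right c5 hk0.le
                have m2 := mul_le_mul_of_nonneg_right
                  (show (my:ℤ) - mx ≤ (n:ℤ) - 3 by omega) hk0.le
                exact Or.inl ⟨by linarith, by linarith⟩
              · have c5 : (1:ℤ) ≤ (mx:ℤ) - my := by omega
                have m1 := mul_le_mul_of_nonneg_right c5 hk0.le
                have m2 := mul_le_mul_of_nonneg_right
                  (show (mx:ℤ) - my ≤ (n:ℤ) - 3 by omega) hk0.le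
                exact Or.inr ⟨by linarith, by linarith⟩
    · -- a -- v_i
      rw [h0x, e0, emid my h2y (by omega)]
      have c1 : (2:ℤ) ≤ (my:ℤ) := by omega
      have c2 : (my:ℤ) ≤ (n:ℤ) - 1 := by omega
      have m1 := mul_le_mul_of_nonneg_right c1 hk0.le
      have m2 := mul_le_mul_of_nonneg_right c2 hk0.le
      by_cases hAB : (k:ℤ) ≤ D
      · rw [if_pos hAB]
        refine emod_window hP hk0 (W := ((my:ℤ) - 1) * k) ?_
          (Or.inl ⟨by linarith, by linarith⟩)
        rw [emod_sub_left]; exact modeq_shift 0 (by ring)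
      · rw [if_neg hAB]
        refine emod_window hP hk0 (W := (my:ℤ) * k - D) ?_
          (Or.inl ⟨by linarith, by linarith⟩)
        rw [emod_sub_left]; exact modeq_shift (-q) (by linear_combination -hq)
    · -- b -- v_{n-1}
      rw [h1x, hyn, e1, etop]
      have m3 := mul_le_mul_of_nonneg_right hN3 hk0.le
      by_cases hAB : (k:ℤ) ≤ D
      · rw [if_pos hAB]
        by_cases hDs : D ≤ (p:ℤ) - k
        · rw [if_pos hDs]
          exact emod_window hP hk0 (W := D) (modeq_shift q (by linear_combination hq))
            (Or.inl ⟨hAB, hDs⟩)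
        · rw [if_neg hDs]
          refine emod_window hP hk0 (W := D + 1 - (k:ℤ)) ?_
            (Or.inl ⟨by linarith, by linarith⟩)
          rw [emod_sub_left]; exact modeq_shift q (by linear_combination hq)
      · rw [if_neg hAB]
        refine emod_window hP hk0 (W := (k:ℤ)) ?_ (Or.inl ⟨le_refl _, by linarith⟩)
        rw [emod_sub_left]; exact modeq_shift 0 (by ring)
  refine ⟨fun v => (gcol k n (X:ℤ) (Y:ℤ) D p v.val).toNat, ?_, ?_, ?_, ?_⟩
  · show (gcol k n (X:ℤ) (Y:ℤ) D p (0 : Fin (n+1)).val).toNat = X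
    rw [Fin.val_zero, e0]; exact Int.toNat_natCast X
  · have hv1 : (1 : Fin (n+1)).val = 1 := by
      rw [Fin.val_one']; exact Nat.mod_eq_of_lt (by omega)
    show (gcol k n (X:ℤ) (Y:ℤ) D p (1 : Fin (n+1)).val).toNat = Y
    rw [hv1, e1]; exact Int.toNat_natCast Y
  · intro v
    beta_reduce
    have := gcol_bounds (k := k) (n := n) (D := D) hP hX0 hXP hY0 hYP v.val
    omega
  · intro x y hxy
    beta_reduce
    rw [Kgadget, SimpleGraph.fromRel_adj] at hxy
    obtain ⟨hne, hrel | hrel⟩ := hxy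
    · have hvne : x.val ≠ y.val := fun hv => hne (Fin.ext hv)
      have hm := main x.val y.val (by omega) (by omega) hvne hrel
      have hbx := gcol_bounds (k := k) (n := n) (D := D) hP hX0 hXP hY0 hYP x.val
      have hby := gcol_bounds (k := k) (n := n) (D := D) hP hX0 hXP hY0 hYP y.val
      have hgx : (((gcol k n (X:ℤ) (Y:ℤ) D p x.val).toNat : ℕ) : ℤ)
          = gcol k n (X:ℤ) (Y:ℤ) D p x.val := Int.toNat_of_nonneg hbx.1
      have hgy : (((gcol k n (X:ℤ) (Y:ℤ) D p y.val).toNat : ℕ) : ℤ)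
          = gcol k n (X:ℤ) (Y:ℤ) D p y.val := Int.toNat_of_nonneg hby.1
      have hres := circ_abs (p := p) (k := k)
        (a := (gcol k n (X:ℤ) (Y:ℤ) D p y.val).toNat)
        (b := (gcol k n (X:ℤ) (Y:ℤ) D p x.val).toNat)
        (by omega) (by omega)
        (by rw [hgy, hgx]; exact hm.1) (by rw [hgy, hgx]; exact hm.2)
      rw [abs_sub_comm] at hres
      exact hres
    · have hvne : y.val ≠ x.val := fun hv => hne (Fin.ext hv.symm)
      have hm := main y.val x.val (by omega) (by omega) hvne hrel
      have hbx := gcol_bounds (k := k) (n := n) (D := D) hP hX0 hXP hY0 hYP x.val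
      have hby := gcol_bounds (k := k) (n := n) (D := D) hP hX0 hXP hY0 hYP y.val
      have hgx : (((gcol k n (X:ℤ) (Y:ℤ) D p x.val).toNat : ℕ) : ℤ)
          = gcol k n (X:ℤ) (Y:ℤ) D p x.val := Int.toNat_of_nonneg hbx.1
      have hgy : (((gcol k n (X:ℤ) (Y:ℤ) D p y.val).toNat : ℕ) : ℤ)
          = gcol k n (X:ℤ) (Y:ℤ) D p y.val := Int.toNat_of_nonneg hby.1
      exact circ_abs (p := p) (k := k) (by omega) (by omega)
        (by rw [hgx, hgy]; exact hm.1) (by rw [hgx, hgy]; exact hm.2)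


private lemma Kgadget_not_adj01 {n : ℕ} (hn : 3 ≤ n) : ¬ (Kgadget n).Adj 0 1 := by
  rw [Kgadget, SimpleGraph.fromRel_adj]
  have h1 : (1 : Fin (n+1)).val = 1 := by
    rw [Fin.val_one']; exact Nat.mod_eq_of_lt (by omega)
  have h0 : (0 : Fin (n+1)).val = 0 := rfl
  rintro ⟨hne, hrel | hrel⟩ <;> rw [h0, h1] at hrel <;> omega

/-- for `k ≥ 2`, `n ≥ 3`, if `χ(G') ≤ kn - 1` and `G` is
obtained from `G' ⊔ K_n` by replacing every edge by `(K; a, b)`, then `G` has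
a `(kn-1, k)`-coloring, hence `χ_c(G) ≤ n - 1/k`. -/
theorem stmt_18 {V : Type*} (k n : ℕ) (hk : 2 ≤ k) (hn : 3 ≤ n)
    (G' : SimpleGraph V) (o : V ⊕ Fin n → V ⊕ Fin n → Prop)
    (ho : Orients (disjUnion G' (⊤ : SimpleGraph (Fin n))) o)
    (h : G'.Colorable (k * n - 1)) :
    (∃ c, IsCircColoring
        (replaceEdges (disjUnion G' (⊤ : SimpleGraph (Fin n))) o (Kgadget n) 0 1)
        (k * n - 1) k c) ∧
    circChrom
        (replaceEdges (disjUnion G' (⊤ : SimpleGraph (Fin n))) o (Kgadget n) 0 1)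
      ≤ (n : ℝ) - 1 / (k : ℝ) := by
  classical
  have hkn : 6 ≤ k * n := le_trans (by norm_num) (Nat.mul_le_mul hk hn)
  have hppos : 0 < k * n - 1 := by omega
  have hnp : n ≤ k * n - 1 := by
    have := Nat.mul_le_mul_right n hk; omega
  obtain ⟨C⟩ := h
  set base := disjUnion G' (⊤ : SimpleGraph (Fin n)) with hbase
  set f : V ⊕ Fin n → ℕ := Sum.elim (fun v => (C v).val) (fun i => i.val) with hf
  have hflt : ∀ u, f u < k * n - 1 := by
    rintro (u | u)
    · exact (C u).isLt
    · exact lt_of_lt_of_le u.isLt hnp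
  have hfprop : ∀ ⦃u v⦄, base.Adj u v → f u ≠ f v := by
    rintro (u | u) (v | v) hadj <;>
      rw [hbase, disjUnion, SimpleGraph.fromRel_adj] at hadj <;>
      obtain ⟨hne, hr | hr⟩ := hadj
    · exact fun hfe => (C.valid hr) (Fin.val_injective hfe)
    · exact fun hfe => (C.valid hr.symm) (Fin.val_injective hfe)
    · exact hr.elim
    · exact hr.elim
    · exact hr.elim
    · exact hr.elim
    · exact fun hfe => hne (congrArg Sum.inr (Fin.val_injective hfe))
    · exact fun hfe => hne (congrArg Sum.inr (Fin.val_injective hfe))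
  have hgad : ∀ u v : V ⊕ Fin n, base.Adj u v →
      ∃ g : Fin (n + 1) → ℕ, g 0 = f u ∧ g 1 = f v ∧
        IsCircColoring (Kgadget n) (k * n - 1) k g :=
    fun u v hadj => gadget_coloring k n hk hn (f u) (f v) (hflt u) (hflt v) (hfprop hadj)
  choose g hg0 hg1 hgc using hgad
  set c : (V ⊕ Fin n) ⊕
      ((V ⊕ Fin n) × (V ⊕ Fin n) ×
        {w : Fin (n+1) // w ≠ 0 ∧ w ≠ 1}) → ℕ :=
    fun z => match z with
    | Sum.inl u => f u
    | Sum.inr (x, y, i) => if hadj : base.Adj x y then g x y hadj i.1 else 0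
    with hc
  have hcirc : IsCircColoring (replaceEdges base o (Kgadget n) 0 1) (k * n - 1) k c := by
    constructor
    · rintro (u | ⟨x, y, i⟩)
      · exact hflt u
      · show (if hadj : base.Adj x y then g x y hadj i.1 else 0) < k * n - 1
        split_ifs with hadj
        · exact ((hgc x y hadj).1 i.1)
        · exact hppos
    · rintro (u | ⟨x, y, i⟩) (v | ⟨x', y', j⟩) hadj <;>
        rw [replaceEdges, SimpleGraph.fromRel_adj] at hadj
      · obtain ⟨-, hr | hr⟩ := hadj <;> exact absurd hr.2 (Kgadget_not_adj01 hn)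
      · obtain ⟨-, hr | hr⟩ := hadj
        · obtain ⟨hb, -, hor⟩ := hr
          have hcv : c (Sum.inr (x', y', j)) = g x' y' hb j.1 := dif_pos hb
          have hcu : c (Sum.inl u) = f u := rfl
          rw [hcu, hcv]
          rcases hor with ⟨rfl, hK⟩ | ⟨rfl, hK⟩
          · rw [show f u = g u y' hb 0 from (hg0 u y' hb).symm]
            exact (hgc u y' hb).2 hK
          · rw [show f u = g x' u hb 1 from (hg1 x' u hb).symm]
            exact (hgc x' u hb).2 hK
        · exact hr.elim
      · obtain ⟨-, hr | hr⟩ := hadj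
        · exact hr.elim
        · obtain ⟨hb, -, hor⟩ := hr
          have hcv : c (Sum.inr (x, y, i)) = g x y hb i.1 := dif_pos hb
          have hcu : c (Sum.inl v) = f v := rfl
          rw [hcu, hcv, abs_sub_comm]
          rcases hor with ⟨rfl, hK⟩ | ⟨rfl, hK⟩
          · rw [show f v = g v y hb 0 from (hg0 v y hb).symm]
            exact (hgc v y hb).2 hK
          · rw [show f v = g x v hb 1 from (hg1 x v hb).symm]
            exact (hgc x v hb).2 hK
      · obtain ⟨-, hr | hr⟩ := hadj
        · obtain ⟨rfl, rfl, hb, -, hK⟩ := hr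
          have hcv1 : c (Sum.inr (x, y, i)) = g x y hb i.1 := dif_pos hb
          have hcv2 : c (Sum.inr (x, y, j)) = g x y hb j.1 := dif_pos hb
          rw [hcv1, hcv2]
          exact (hgc x y hb).2 hK
        · obtain ⟨rfl, rfl, hb, -, hK⟩ := hr
          have hcv1 : c (Sum.inr (x', y', i)) = g x' y' hb i.1 := dif_pos hb
          have hcv2 : c (Sum.inr (x', y', j)) = g x' y' hb j.1 := dif_pos hb
          rw [hcv1, hcv2]
          exact (hgc x' y' hb).2 hK.symm
  refine ⟨⟨c, hcirc⟩, ?_⟩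
  have hkpos : 0 < k := by omega
  have hle : circChrom (replaceEdges base o (Kgadget n) 0 1)
      ≤ ((k * n - 1 : ℕ) : ℝ) / (k : ℝ) := by
    unfold circChrom
    apply csInf_le
    · refine ⟨0, ?_⟩
      rintro r ⟨p', q', hp', hq', rfl, -⟩
      positivity
    · exact ⟨k * n - 1, k, hppos, hkpos, rfl, c, hcirc⟩
  refine le_trans hle ?_
  have hcast : ((k * n - 1 : ℕ) : ℝ) = (k : ℝ) * n - 1 := by
    have h1 : ((k * n : ℕ) : ℝ) = (k : ℝ) * n := by push_cast; ring
    rw [Nat.cast_sub (by omega), h1, Nat.cast_one]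
  rw [hcast]
  have hk0 : (k : ℝ) ≠ 0 := by positivity
  have : ((k : ℝ) * n - 1) / k = n - 1 / k := by field_simp
  rw [this]
end
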